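/- arXiv:2604.10276 — 8 statements merged into one kernel-verified Lean document; each statement's English description precedes it below -/
import Mathlib

section
/- For every k ≥ 2, the squared norm of the double Geronimus polynomial satisfies ⟨P_k^{gg}, P_k^{gg}⟩_gg = C_k ‖P_{k−2}‖₀². -/
open MeasureTheory Polynomial Matrix

theorem double_geronimus_norm
    (μ μgg : MeasureTheory.Measure ℝ) (E : Set ℝ) (a : ℝ)
    (hEc : IsCompact E) (hEinf : E.Infinite) (haE : a ∉ E) (hEsupp : μ Eᶜ = 0)
    (hμint : ∀ p : ℝ[X], MeasureTheory.Integrable (fun x => p.eval x) μ)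
    (hμpos : ∀ p : ℝ[X], p ≠ 0 → 0 < ∫ x, (p.eval x) ^ 2 ∂μ)
    (P : ℕ → ℝ[X])
    (hPmonic : ∀ n, (P n).Monic)
    (hPdeg : ∀ n, (P n).natDegree = n)
    (hPorth : ∀ m n, m ≠ n → ∫ x, (P m).eval x * (P n).eval x ∂μ = 0)
    (nrm : ℕ → ℝ) (hnrm : ∀ k, nrm k = ∫ x, ((P k).eval x) ^ 2 ∂μ)
    (hμggint : ∀ p : ℝ[X], MeasureTheory.Integrable (fun x => p.eval x) μgg)
    (hμgg : ∀ p : ℝ[X], ∫ x, p.eval x * (x - a) ^ 2 ∂μgg = ∫ x, p.eval x ∂μ)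
    (M₁ : Matrix (Fin 2) (Fin 2) ℝ) (hM₁ : M₁.IsSymm)
    (inn : ℝ[X] → ℝ[X] → ℝ)
    (hinn : ∀ p q : ℝ[X], inn p q = (∫ x, p.eval x * q.eval x ∂μgg)
      + ![p.eval a, (derivative p).eval a] ⬝ᵥ
          M₁.mulVec ![q.eval a, (derivative q).eval a])
    (hinnpos : ∀ p : ℝ[X], p ≠ 0 → 0 < inn p p)
    (Pgg : ℕ → ℝ[X])
    (hGmonic : ∀ n, (Pgg n).Monic)
    (hGdeg : ∀ n, (Pgg n).natDegree = n)
    (hGorth : ∀ m n, m ≠ n → inn (Pgg m) (Pgg n) = 0)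
    (B C' : ℕ → ℝ)
    (hconn1 : Pgg 1 = P 1 + Polynomial.C (B 1) * P 0)
    (hconn : ∀ n, 2 ≤ n →
      Pgg n = P n + Polynomial.C (B n) * P (n - 1) + Polynomial.C (C' n) * P (n - 2))
    (hC' : ∀ n, 2 ≤ n → C' n ≠ 0)
    : ∀ k, 2 ≤ k → inn (Pgg k) (Pgg k) = C' k * nrm (k - 2) := by
  intro k hk
  -- integrability of products under μgg
  have hInt : ∀ p q : ℝ[X], Integrable (fun x => p.eval x * q.eval x) μgg := by
    intro p q
    simpa [Polynomial.eval_mul] using hμggint (p * q)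
  -- additivity in second argument
  have hinn_add : ∀ p q r : ℝ[X], inn p (q + r) = inn p q + inn p r := by
    intro p q r
    rw [hinn, hinn, hinn]
    have h1 : ∫ x, p.eval x * (q + r).eval x ∂μgg
        = (∫ x, p.eval x * q.eval x ∂μgg) + ∫ x, p.eval x * r.eval x ∂μgg := by
      rw [← integral_add (hInt p q) (hInt p r)]
      congr 1; funext x; simp [mul_add]
    rw [h1]
    simp [Matrix.mulVec, dotProduct, Fin.sum_univ_two]
    ring
  -- scaling in second argument
  have hinn_smul : ∀ (p q : ℝ[X]) (c : ℝ), inn p (Polynomial.C c * q) = c * inn p q := by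
    intro p q c
    rw [hinn, hinn]
    have h1 : ∫ x, p.eval x * (Polynomial.C c * q).eval x ∂μgg
        = c * ∫ x, p.eval x * q.eval x ∂μgg := by
      rw [← integral_const_mul]
      congr 1; funext x; simp; ring
    rw [h1]
    simp [Matrix.mulVec, dotProduct, Fin.sum_univ_two]
    ring
  have hPgg0 : Pgg 0 = 1 := (hGmonic 0).natDegree_eq_zero.mp (hGdeg 0)
  -- orthogonality to lower degree polynomials
  have key : ∀ d, ∀ q : ℝ[X], q.natDegree ≤ d → q.natDegree < k → inn (Pgg k) q = 0 := by
    intro d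
    induction d with
    | zero =>
      intro q hq hqk
      have hqC : q = Polynomial.C (q.coeff 0) := Polynomial.eq_C_of_natDegree_le_zero hq
      have : q = Polynomial.C (q.coeff 0) * Pgg 0 := by rw [hPgg0, mul_one]; exact hqC
      rw [this, hinn_smul, hGorth k 0 (by omega), mul_zero]
    | succ d ih =>
      intro q hq hqk
      by_cases h0 : q.natDegree ≤ d
      · exact ih q h0 hqk
      · have hdeg : q.natDegree = d + 1 := le_antisymm hq (by omega)
        have hq0 : q ≠ 0 := by
          intro h; rw [h] at hdeg; simp at hdeg
        set n := q.natDegree with hn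
        set g := Polynomial.C q.leadingCoeff * Pgg n with hg
        have hlc : q.leadingCoeff ≠ 0 := Polynomial.leadingCoeff_ne_zero.mpr hq0
        have hg0 : g ≠ 0 :=
          mul_ne_zero (by simpa using hlc) (hGmonic n).ne_zero
        have hgnd : g.natDegree = n := by
          rw [hg, Polynomial.natDegree_C_mul hlc, hGdeg]
        have hgdeg : q.degree = g.degree := by
          rw [Polynomial.degree_eq_natDegree hq0, Polynomial.degree_eq_natDegree hg0, hgnd]
        have hglc : q.leadingCoeff = g.leadingCoeff := by
          rw [hg, Polynomial.leadingCoeff_mul, Polynomial.leadingCoeff_C,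
            (hGmonic n).leadingCoeff, mul_one]
        have hsub : (q - g).degree < q.degree := Polynomial.degree_sub_lt hgdeg hq0 hglc
        have hsubnd : (q - g).natDegree < n := by
          by_cases hz : q - g = 0
          · rw [hz]; simpa [Polynomial.natDegree_zero] using (by omega : 0 < n)
          · exact Polynomial.natDegree_lt_natDegree hz hsub
        have h1 : inn (Pgg k) (q - g) = 0 := ih (q - g) (by omega) (by omega)
        have h2 : inn (Pgg k) g = 0 := by
          rw [hg, hinn_smul, hGorth k n (by omega), mul_zero]
        calc inn (Pgg k) q = inn (Pgg k) ((q - g) + g) := by rw [sub_add_cancel]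
          _ = inn (Pgg k) (q - g) + inn (Pgg k) g := hinn_add _ _ _
          _ = 0 := by rw [h1, h2, add_zero]
  -- the auxiliary monic polynomial
  set m : ℝ[X] := (X - Polynomial.C a) ^ 2 * P (k - 2) with hm
  have hmmonic : m.Monic := ((monic_X_sub_C a).pow 2).mul (hPmonic _)
  have hmdeg : m.natDegree = k := by
    rw [hm, Polynomial.natDegree_mul (pow_ne_zero 2 (X_sub_C_ne_zero a)) (hPmonic _).ne_zero,
      Polynomial.natDegree_pow, Polynomial.natDegree_X_sub_C, hPdeg]
    omega
  have hdiff : (Pgg k - m).natDegree < k := by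
    by_cases hz : Pgg k - m = 0
    · rw [hz]; simpa using (by omega : 0 < k)
    · have hdeq : (Pgg k).degree = m.degree := by
        rw [Polynomial.degree_eq_natDegree (hGmonic k).ne_zero,
          Polynomial.degree_eq_natDegree hmmonic.ne_zero, hGdeg, hmdeg]
      have := Polynomial.natDegree_lt_natDegree hz
        (Polynomial.degree_sub_lt hdeq (hGmonic k).ne_zero
          (by rw [(hGmonic k).leadingCoeff, hmmonic.leadingCoeff]))
      rw [hGdeg] at this
      exact this
  have step1 : inn (Pgg k) (Pgg k) = inn (Pgg k) m := by
    have hrew : Pgg k = (Pgg k - m) + m := by ring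
    calc inn (Pgg k) (Pgg k) = inn (Pgg k) ((Pgg k - m) + m) := by rw [← hrew]
      _ = inn (Pgg k) (Pgg k - m) + inn (Pgg k) m := hinn_add _ _ _
      _ = inn (Pgg k) m := by rw [key k (Pgg k - m) (le_of_lt hdiff) hdiff, zero_add]
  have hma : m.eval a = 0 := by simp [hm]
  have hma' : (derivative m).eval a = 0 := by
    simp [hm, Polynomial.derivative_mul, Polynomial.derivative_pow]
  have step2 : inn (Pgg k) m = ∫ x, (Pgg k * P (k - 2)).eval x ∂μ := by
    rw [hinn]
    have hdot : ![(Pgg k).eval a, (derivative (Pgg k)).eval a] ⬝ᵥ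
        M₁.mulVec ![m.eval a, (derivative m).eval a] = 0 := by
      rw [hma, hma']
      simp [Matrix.mulVec, dotProduct, Fin.sum_univ_two]
    rw [hdot, add_zero]
    have hre : ∫ x, (Pgg k).eval x * m.eval x ∂μgg
        = ∫ x, (Pgg k * P (k - 2)).eval x * (x - a) ^ 2 ∂μgg := by
      congr 1; funext x; simp [hm]; ring
    rw [hre, hμgg]
  -- compute the μ-integral
  have hIntμ : ∀ p q : ℝ[X], Integrable (fun x => p.eval x * q.eval x) μ := by
    intro p q
    simpa [Polynomial.eval_mul] using hμint (p * q)
  have step3 : ∫ x, (Pgg k * P (k - 2)).eval x ∂μ = C' k * nrm (k - 2) := by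
    have i2 : Integrable (fun x => B k * ((P (k - 1)).eval x * (P (k - 2)).eval x)) μ :=
      (hIntμ (P (k - 1)) (P (k - 2))).const_mul _
    have i3 : Integrable (fun x => C' k * ((P (k - 2)).eval x * (P (k - 2)).eval x)) μ :=
      (hIntμ (P (k - 2)) (P (k - 2))).const_mul _
    have i23 : Integrable (fun x => B k * ((P (k - 1)).eval x * (P (k - 2)).eval x)
        + C' k * ((P (k - 2)).eval x * (P (k - 2)).eval x)) μ := i2.add i3
    have hfun : (fun x => (Pgg k * P (k - 2)).eval x)
        = fun x => (P k).eval x * (P (k - 2)).eval x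
            + (B k * ((P (k - 1)).eval x * (P (k - 2)).eval x)
              + C' k * ((P (k - 2)).eval x * (P (k - 2)).eval x)) := by
      funext x
      rw [hconn k hk]
      simp [Polynomial.eval_mul, Polynomial.eval_add]
      ring
    rw [hfun, integral_add (hIntμ (P k) (P (k - 2))) i23, integral_add i2 i3, integral_const_mul, integral_const_mul,
      hPorth k (k - 2) (by omega), hPorth (k - 1) (k - 2) (by omega)]
    have hsq : ∫ x, (P (k - 2)).eval x * (P (k - 2)).eval x ∂μ = nrm (k - 2) := by
      rw [hnrm]; congr 1; funext x; ring
    rw [hsq]; ring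
  rw [step1, step2, step3]
end

section
/- For every n ≥ 1, the monic Sobolev orthogonal polynomial satisfies Q_n^{M,N}(x) = P_n(x) − M Q_n^{M,N}(a) K_{n−1}(x,a) − N (Q_n^{M,N})′(a) K_{n−1}^{(0,1)}(x,a) as an identity of polynomials in x. -/
open MeasureTheory Polynomial Matrix

/-- A monic family with `natDegree (P k) = k` spans polynomials of degree `< n`. -/
private lemma span_monic_aux (P : ℕ → ℝ[X]) (hPmonic : ∀ n, (P n).Monic)
    (hPdeg : ∀ n, (P n).natDegree = n) :
    ∀ n (p : ℝ[X]), p.degree < (n : ℕ) → ∃ c : ℕ → ℝ,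
      p = ∑ k ∈ Finset.range n, Polynomial.C (c k) * P k := by
  intro n
  induction n with
  | zero =>
    intro p hp
    refine ⟨0, ?_⟩
    have h0 : p.degree < 0 := by exact_mod_cast hp
    have : p = 0 := Polynomial.degree_eq_bot.mp (Nat.WithBot.lt_zero_iff.mp h0)
    simp [this]
  | succ n ih =>
    intro p hp
    have hPn1 : (P n).coeff n = 1 := by
      have := (hPmonic n).leadingCoeff
      rwa [Polynomial.leadingCoeff, hPdeg n] at this
    have hq : (p - Polynomial.C (p.coeff n) * P n).degree < (n : ℕ) := by
      rw [Polynomial.degree_lt_iff_coeff_zero]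
      intro m hm
      have hm' : n ≤ m := by exact_mod_cast hm
      rcases eq_or_lt_of_le hm' with h | h
      · subst h
        simp [Polynomial.coeff_sub, Polynomial.coeff_C_mul, hPn1]
      · have h1 : p.coeff m = 0 := by
          apply Polynomial.coeff_eq_zero_of_degree_lt
          exact lt_of_lt_of_le hp (by exact_mod_cast h)
        have h2 : (P n).coeff m = 0 :=
          Polynomial.coeff_eq_zero_of_natDegree_lt (by rw [hPdeg]; exact h)
        simp [Polynomial.coeff_sub, Polynomial.coeff_C_mul, h1, h2]
    obtain ⟨c, hc⟩ := ih _ hq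
    refine ⟨fun k => if k = n then p.coeff n else c k, ?_⟩
    rw [Finset.sum_range_succ]
    have : ∑ k ∈ Finset.range n, Polynomial.C (if k = n then p.coeff n else c k) * P k
        = ∑ k ∈ Finset.range n, Polynomial.C (c k) * P k := by
      apply Finset.sum_congr rfl
      intro k hk
      rw [if_neg (Nat.ne_of_lt (Finset.mem_range.mp hk))]
    beta_reduce
    rw [this, if_pos rfl, ← hc]
    ring

theorem sobolev_kernel_representation
    (μ : MeasureTheory.Measure ℝ) (E : Set ℝ) (a : ℝ)
    (hEc : IsCompact E) (hEinf : E.Infinite) (haE : a ∉ E) (hEsupp : μ Eᶜ = 0)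
    (hμint : ∀ p : ℝ[X], MeasureTheory.Integrable (fun x => p.eval x) μ)
    (hμpos : ∀ p : ℝ[X], p ≠ 0 → 0 < ∫ x, (p.eval x) ^ 2 ∂μ)
    (P : ℕ → ℝ[X])
    (hPmonic : ∀ n, (P n).Monic)
    (hPdeg : ∀ n, (P n).natDegree = n)
    (hPorth : ∀ m n, m ≠ n → ∫ x, (P m).eval x * (P n).eval x ∂μ = 0)
    (nrm : ℕ → ℝ) (hnrm : ∀ k, nrm k = ∫ x, ((P k).eval x) ^ 2 ∂μ)
    (M N : ℝ) (hM : 0 < M) (hN : 0 < N)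
    (innS : ℝ[X] → ℝ[X] → ℝ)
    (hinnS : ∀ p q : ℝ[X], innS p q = (∫ x, p.eval x * q.eval x ∂μ)
      + M * p.eval a * q.eval a
      + N * (derivative p).eval a * (derivative q).eval a)
    (Q : ℕ → ℝ[X])
    (hQmonic : ∀ n, (Q n).Monic)
    (hQdeg : ∀ n, (Q n).natDegree = n)
    (hQorth : ∀ m n, m ≠ n → innS (Q m) (Q n) = 0)
    (Kpoly K01poly : ℕ → ℝ[X])
    (hKpoly : ∀ n, Kpoly n
      = ∑ k ∈ Finset.range n, Polynomial.C ((P k).eval a / nrm k) * P k)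
    (hK01poly : ∀ n, K01poly n
      = ∑ k ∈ Finset.range n, Polynomial.C ((derivative (P k)).eval a / nrm k) * P k)
    (Kd : ℕ → ℕ → ℕ → ℝ)
    (hKd : ∀ i j n, Kd i j n
      = ∑ k ∈ Finset.range n,
          ((⇑(derivative (R := ℝ)))^[i] (P k)).eval a
            * ((⇑(derivative (R := ℝ)))^[j] (P k)).eval a / nrm k)
    : ∀ n, 1 ≤ n →
      Q n = P n - Polynomial.C (M * (Q n).eval a) * Kpoly n
        - Polynomial.C (N * (derivative (Q n)).eval a) * K01poly n := by
  -- the L² pairing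
  set L : ℝ[X] → ℝ[X] → ℝ := fun p q => ∫ x, p.eval x * q.eval x ∂μ with hL
  have hLint : ∀ p q : ℝ[X], Integrable (fun x => p.eval x * q.eval x) μ := by
    intro p q
    have := hμint (p * q)
    simpa using this
  have hLadd : ∀ p q r : ℝ[X], L (p + q) r = L p r + L q r := by
    intro p q r
    simp only [hL, Polynomial.eval_add, add_mul]
    exact integral_add (hLint p r) (hLint q r)
  have hLsub : ∀ p q r : ℝ[X], L (p - q) r = L p r - L q r := by
    intro p q r
    simp only [hL, Polynomial.eval_sub, sub_mul]
    exact integral_sub (hLint p r) (hLint q r)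
  have hLC : ∀ (c : ℝ) (p q : ℝ[X]), L (Polynomial.C c * p) q = c * L p q := by
    intro c p q
    simp only [hL, Polynomial.eval_mul, Polynomial.eval_C, mul_assoc]
    exact integral_const_mul c _
  have hLcomm : ∀ p q : ℝ[X], L p q = L q p := by
    intro p q; simp only [hL, mul_comm]
  have hLsum : ∀ (s : Finset ℕ) (c : ℕ → ℝ) (f : ℕ → ℝ[X]) (q : ℝ[X]),
      L (∑ k ∈ s, Polynomial.C (c k) * f k) q = ∑ k ∈ s, c k * L (f k) q := by
    intro s c f q
    classical
    induction s using Finset.induction_on with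
    | empty => simp [hL]
    | insert _ _ h ih =>
      rw [Finset.sum_insert h, hLadd, hLC, ih, Finset.sum_insert h]
  have hnrm_pos : ∀ k, 0 < nrm k := by
    intro k
    rw [hnrm]
    exact hμpos _ (hPmonic k).ne_zero
  have hLP0 : ∀ j k, j ≠ k → L (P j) (P k) = 0 := fun j k h => hPorth j k h
  have hLPP : ∀ k, L (P k) (P k) = nrm k := by
    intro k
    rw [hnrm]
    simp only [hL]
    congr 1
    funext x
    ring
  -- linearity of the Sobolev product in the second slot
  have hS_add : ∀ p q r : ℝ[X], innS p (q + r) = innS p q + innS p r := by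
    intro p q r
    rw [hinnS, hinnS, hinnS]
    have : (∫ x, p.eval x * (q + r).eval x ∂μ)
        = (∫ x, p.eval x * q.eval x ∂μ) + ∫ x, p.eval x * r.eval x ∂μ := by
      simp only [Polynomial.eval_add, mul_add]
      exact integral_add (hLint p q) (hLint p r)
    rw [this]
    simp only [Polynomial.eval_add, derivative_add]
    ring
  have hS_smul : ∀ (c : ℝ) (p q : ℝ[X]), innS p (Polynomial.C c * q) = c * innS p q := by
    intro c p q
    rw [hinnS, hinnS]
    have : (∫ x, p.eval x * (Polynomial.C c * q).eval x ∂μ)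
        = c * ∫ x, p.eval x * q.eval x ∂μ := by
      simp only [Polynomial.eval_mul, Polynomial.eval_C]
      rw [← integral_const_mul]
      congr 1; funext x; ring
    rw [this]
    simp only [derivative_mul, derivative_C, Polynomial.eval_mul, Polynomial.eval_add,
      Polynomial.eval_C, Polynomial.eval_zero]
    ring
  have hS_zero : ∀ p : ℝ[X], innS p 0 = 0 := by
    intro p
    rw [hinnS]; simp
  intro n hn
  -- Q n is S-orthogonal to every polynomial of degree < n
  have hSQ : ∀ p : ℝ[X], p.degree < (n : ℕ) → innS (Q n) p = 0 := by
    intro p hp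
    obtain ⟨c, rfl⟩ := span_monic_aux Q hQmonic hQdeg n p hp
    have : innS (Q n) (∑ k ∈ Finset.range n, Polynomial.C (c k) * Q k)
        = ∑ k ∈ Finset.range n, c k * innS (Q n) (Q k) := by
      classical
      induction (Finset.range n) using Finset.induction_on with
      | empty => simpa using hS_zero (Q n)
      | insert _ _ h ih =>
        rw [Finset.sum_insert h, Finset.sum_insert h, hS_add, hS_smul, ih]
    rw [this]
    apply Finset.sum_eq_zero
    intro k hk
    rw [hQorth n k (Nat.ne_of_gt (Finset.mem_range.mp hk))]
    ring
  have hdegP : ∀ k, k < n → (P k).degree < (n : ℕ) := by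
    intro k hk
    calc (P k).degree ≤ (P k).natDegree := Polynomial.degree_le_natDegree
    _ = (k : WithBot ℕ) := by rw [hPdeg]
    _ < (n : ℕ) := by exact_mod_cast hk
  -- the key integral identity for Q n against P k
  have h1 : ∀ k, k < n → L (Q n) (P k)
      = -(M * (Q n).eval a * (P k).eval a)
        - N * (derivative (Q n)).eval a * (derivative (P k)).eval a := by
    intro k hk
    have h0 := hSQ (P k) (hdegP k hk)
    rw [hinnS] at h0
    simp only [hL]
    linarith
  -- kernel reproducing identities
  have hK1 : ∀ k, k < n → L (Kpoly n) (P k) = (P k).eval a := by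
    intro k hk
    rw [hKpoly, hLsum]
    rw [Finset.sum_eq_single k]
    · rw [hLPP, div_mul_cancel₀ _ (hnrm_pos k).ne']
    · intro j _ hj
      rw [hLP0 j k hj]
      ring
    · intro h; exact absurd (Finset.mem_range.mpr hk) h
  have hK2 : ∀ k, k < n → L (K01poly n) (P k) = (derivative (P k)).eval a := by
    intro k hk
    rw [hK01poly, hLsum]
    rw [Finset.sum_eq_single k]
    · rw [hLPP, div_mul_cancel₀ _ (hnrm_pos k).ne']
    · intro j _ hj
      rw [hLP0 j k hj]
      ring
    · intro h; exact absurd (Finset.mem_range.mpr hk) h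
  -- the difference polynomial
    -- D := Q n - P n + C(M Qn(a)) Kpoly n + C(N Qn'(a)) K01poly n
  set D : ℝ[X] := Q n - P n + Polynomial.C (M * (Q n).eval a) * Kpoly n
      + Polynomial.C (N * (derivative (Q n)).eval a) * K01poly n with hD
  have hDP : ∀ k, k < n → L D (P k) = 0 := by
    intro k hk
    rw [hD, hLadd, hLadd, hLsub, hLC, hLC, h1 k hk, hLP0 n k (Nat.ne_of_gt hk),
      hK1 k hk, hK2 k hk]
    ring
  -- D has degree < n
  have hCmul_deg : ∀ (c : ℝ) (p : ℝ[X]), p.degree < (n : ℕ)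
      → (Polynomial.C c * p).degree < (n : ℕ) := by
    intro c p hp
    rcases eq_or_ne c 0 with rfl | hc
    · simp only [map_zero, zero_mul, Polynomial.degree_zero]
      exact_mod_cast WithBot.bot_lt_coe n
    · rwa [Polynomial.degree_C_mul hc]
  have hKdeg : ∀ (f : ℕ → ℝ), (∑ k ∈ Finset.range n, Polynomial.C (f k) * P k).degree
      < (n : ℕ) := by
    intro f
    apply lt_of_le_of_lt (Polynomial.degree_sum_le _ _)
    rw [Finset.sup_lt_iff (by exact_mod_cast WithBot.bot_lt_coe n)]
    intro k hk
    calc (Polynomial.C (f k) * P k).degree ≤ (Polynomial.C (f k)).degree + (P k).degree :=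
          Polynomial.degree_mul_le _ _
    _ ≤ 0 + (P k).degree := add_le_add Polynomial.degree_C_le le_rfl
    _ = (P k).degree := by rw [zero_add]
    _ < (n : ℕ) := hdegP k (Finset.mem_range.mp hk)
  have hQPdeg : (Q n - P n).degree < (n : ℕ) := by
    have h1 : (Q n).degree = (n : ℕ) := by
      rw [Polynomial.degree_eq_natDegree (hQmonic n).ne_zero, hQdeg]
    have h2 : (P n).degree = (n : ℕ) := by
      rw [Polynomial.degree_eq_natDegree (hPmonic n).ne_zero, hPdeg]
    have := Polynomial.degree_sub_lt (h1.trans h2.symm) (hQmonic n).ne_zero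
      (by rw [(hQmonic n).leadingCoeff, (hPmonic n).leadingCoeff])
    rwa [h1] at this
  have hDdeg : D.degree < (n : ℕ) := by
    rw [hD]
    apply lt_of_le_of_lt (Polynomial.degree_add_le _ _)
    rw [max_lt_iff]
    constructor
    · apply lt_of_le_of_lt (Polynomial.degree_add_le _ _)
      rw [max_lt_iff]
      refine ⟨hQPdeg, ?_⟩
      rw [hKpoly]
      exact hCmul_deg _ _ (hKdeg _)
    · rw [hK01poly]
      exact hCmul_deg _ _ (hKdeg _)
  -- conclude D = 0
  have hD0 : D = 0 := by
    by_contra hne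
    have hpos := hμpos D hne
    obtain ⟨c, hc⟩ := span_monic_aux P hPmonic hPdeg n D hDdeg
    have hzero : L D D = 0 := by
      calc L D D = L (∑ k ∈ Finset.range n, Polynomial.C (c k) * P k) D := by rw [← hc]
      _ = ∑ k ∈ Finset.range n, c k * L (P k) D := hLsum _ _ _ _
      _ = 0 := Finset.sum_eq_zero fun k hk => by
          rw [hLcomm, hDP k (Finset.mem_range.mp hk)]; ring
    have : L D D = ∫ x, (D.eval x) ^ 2 ∂μ := by
      simp only [hL]
      congr 1; funext x; ring
    rw [this] at hzero
    linarith
  rw [hD] at hD0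
  linear_combination (norm := ring_nf) hD0
end

section
/- For every n ≥ 1, set D_n = (1 + M K_{n−1}(a,a))(1 + N K_{n−1}^{(1,1)}(a,a)) − M N K_{n−1}^{(1,0)}(a,a) K_{n−1}^{(0,1)}(a,a). Then D_n > 0 and the Sobolev polynomial values at a are given by Q_n^{M,N}(a) = [P_n(a)(1 + N K_{n−1}^{(1,1)}(a,a)) − N P_n′(a) K_{n−1}^{(0,1)}(a,a)] / D_n and (Q_n^{M,N})′(a) = [(1 + M K_{n−1}(a,a)) P_n′(a) − M K_{n−1}^{(1,0)}(a,a) P_n(a)] / D_n. -/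
open MeasureTheory Polynomial Matrix

private lemma monic_span (R : ℕ → Polynomial ℝ) (hmon : ∀ k, (R k).Monic)
    (hdeg : ∀ k, (R k).natDegree = k) :
    ∀ n : ℕ, ∀ p : Polynomial ℝ, p.degree < (n : ℕ) → ∃ c : ℕ → ℝ,
      p = ∑ k ∈ Finset.range n, Polynomial.C (c k) * R k := by
  intro n
  induction n with
  | zero =>
    intro p hp
    rw [Nat.cast_zero] at hp
    exact ⟨0, by simp [Polynomial.degree_eq_bot.mp (Nat.WithBot.lt_zero_iff.mp hp)]⟩
  | succ n ih =>
    intro p hp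
    by_cases h : p.degree < (n : ℕ)
    · obtain ⟨c, hc⟩ := ih p h
      refine ⟨Function.update c n 0, ?_⟩
      rw [Finset.sum_range_succ, Function.update_self, map_zero, zero_mul, add_zero, hc]
      exact Finset.sum_congr rfl fun k hk => by
        rw [Function.update_of_ne (Finset.mem_range.mp hk).ne]
    · have hp0 : p ≠ 0 := by
        rintro rfl
        exact h (by rw [degree_zero]; exact WithBot.bot_lt_coe n)
      have hdn : p.degree = (n : ℕ) := by
        have h1 : p.natDegree < n + 1 := (natDegree_lt_iff_degree_lt hp0).mpr hp
        have h2 : ¬ p.natDegree < n := fun hc => h ((natDegree_lt_iff_degree_lt hp0).mp hc)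
        rw [degree_eq_natDegree hp0,
          le_antisymm (Nat.lt_succ_iff.mp h1) (not_lt.mp h2)]
      have hlc : p.leadingCoeff ≠ 0 := leadingCoeff_ne_zero.mpr hp0
      set q : Polynomial ℝ := Polynomial.C p.leadingCoeff * R n with hq
      have hqdeg : q.degree = (n : ℕ) := by
        rw [hq, degree_mul, degree_C hlc, zero_add,
          degree_eq_natDegree (hmon n).ne_zero, hdeg n]
      have hqlc : q.leadingCoeff = p.leadingCoeff := by
        rw [hq, leadingCoeff_mul, leadingCoeff_C, (hmon n).leadingCoeff, mul_one]
      have hsub : (p - q).degree < (n : ℕ) := by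
        rw [← hdn]
        exact degree_sub_lt (hdn.trans hqdeg.symm) hp0 hqlc.symm
      obtain ⟨c, hc⟩ := ih (p - q) hsub
      refine ⟨Function.update c n p.leadingCoeff, ?_⟩
      rw [Finset.sum_range_succ, Function.update_self]
      have : ∑ k ∈ Finset.range n, Polynomial.C (Function.update c n p.leadingCoeff k) * R k
          = ∑ k ∈ Finset.range n, Polynomial.C (c k) * R k :=
        Finset.sum_congr rfl fun k hk => by
          rw [Function.update_of_ne (Finset.mem_range.mp hk).ne]
      rw [this, ← hc, hq]
      ring

theorem sobolev_values_at_a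
    (μ : MeasureTheory.Measure ℝ) (E : Set ℝ) (a : ℝ)
    (hEc : IsCompact E) (hEinf : E.Infinite) (haE : a ∉ E) (hEsupp : μ Eᶜ = 0)
    (hμint : ∀ p : ℝ[X], MeasureTheory.Integrable (fun x => p.eval x) μ)
    (hμpos : ∀ p : ℝ[X], p ≠ 0 → 0 < ∫ x, (p.eval x) ^ 2 ∂μ)
    (P : ℕ → ℝ[X])
    (hPmonic : ∀ n, (P n).Monic)
    (hPdeg : ∀ n, (P n).natDegree = n)
    (hPorth : ∀ m n, m ≠ n → ∫ x, (P m).eval x * (P n).eval x ∂μ = 0)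
    (nrm : ℕ → ℝ) (hnrm : ∀ k, nrm k = ∫ x, ((P k).eval x) ^ 2 ∂μ)
    (M N : ℝ) (hM : 0 < M) (hN : 0 < N)
    (innS : ℝ[X] → ℝ[X] → ℝ)
    (hinnS : ∀ p q : ℝ[X], innS p q = (∫ x, p.eval x * q.eval x ∂μ)
      + M * p.eval a * q.eval a
      + N * (derivative p).eval a * (derivative q).eval a)
    (Q : ℕ → ℝ[X])
    (hQmonic : ∀ n, (Q n).Monic)
    (hQdeg : ∀ n, (Q n).natDegree = n)
    (hQorth : ∀ m n, m ≠ n → innS (Q m) (Q n) = 0)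
    (Kpoly K01poly : ℕ → ℝ[X])
    (hKpoly : ∀ n, Kpoly n
      = ∑ k ∈ Finset.range n, Polynomial.C ((P k).eval a / nrm k) * P k)
    (hK01poly : ∀ n, K01poly n
      = ∑ k ∈ Finset.range n, Polynomial.C ((derivative (P k)).eval a / nrm k) * P k)
    (Kd : ℕ → ℕ → ℕ → ℝ)
    (hKd : ∀ i j n, Kd i j n
      = ∑ k ∈ Finset.range n,
          ((⇑(derivative (R := ℝ)))^[i] (P k)).eval a
            * ((⇑(derivative (R := ℝ)))^[j] (P k)).eval a / nrm k)
    : ∀ n, 1 ≤ n →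
      0 < (1 + M * Kd 0 0 n) * (1 + N * Kd 1 1 n) - M * N * Kd 1 0 n * Kd 0 1 n
      ∧ (Q n).eval a
        = ((P n).eval a * (1 + N * Kd 1 1 n) - N * (derivative (P n)).eval a * Kd 0 1 n)
          / ((1 + M * Kd 0 0 n) * (1 + N * Kd 1 1 n) - M * N * Kd 1 0 n * Kd 0 1 n)
      ∧ (derivative (Q n)).eval a
        = ((1 + M * Kd 0 0 n) * (derivative (P n)).eval a - M * Kd 1 0 n * (P n).eval a)
          / ((1 + M * Kd 0 0 n) * (1 + N * Kd 1 1 n) - M * N * Kd 1 0 n * Kd 0 1 n) := by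
  -- basic integrability
  have hint2 : ∀ p q : ℝ[X], Integrable (fun x => p.eval x * q.eval x) μ := by
    intro p q
    simpa [Polynomial.eval_mul] using hμint (p * q)
  -- positivity of norms
  have hnrm_pos : ∀ k, 0 < nrm k := fun k => by
    rw [hnrm k]; exact hμpos (P k) (hPmonic k).ne_zero
  -- linearity of the plain inner product over C-mul-sums (left argument)
  have inn0_sum : ∀ (m : ℕ) (c : ℕ → ℝ) (f : ℕ → ℝ[X]) (w : ℝ[X]),
      ∫ x, (∑ k ∈ Finset.range m, Polynomial.C (c k) * f k).eval x * w.eval x ∂μ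
        = ∑ k ∈ Finset.range m, c k * ∫ x, (f k).eval x * w.eval x ∂μ := by
    intro m c f w
    have : (fun x => (∑ k ∈ Finset.range m, Polynomial.C (c k) * f k).eval x * w.eval x)
        = fun x => ∑ k ∈ Finset.range m, c k * ((f k).eval x * w.eval x) := by
      funext x
      rw [eval_finset_sum, Finset.sum_mul]
      exact Finset.sum_congr rfl fun k _ => by simp [Polynomial.eval_mul]; ring
    rw [this, integral_finset_sum _ fun k _ => (hint2 (f k) w).const_mul (c k)]
    exact Finset.sum_congr rfl fun k _ => integral_const_mul _ _
  -- ∫ Pk * Pk = nrm k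
  have hPP : ∀ k, ∫ x, (P k).eval x * (P k).eval x ∂μ = nrm k := by
    intro k
    rw [hnrm k]
    exact integral_congr_ae (Filter.Eventually.of_forall fun x => (sq ((P k).eval x)).symm)
  -- kernel integrals
  have hKint : ∀ n k, k < n →
      ∫ x, (Kpoly n).eval x * (P k).eval x ∂μ = (P k).eval a := by
    intro n k hk
    rw [hKpoly, inn0_sum]
    rw [Finset.sum_eq_single k
      (fun j _ hjk => by rw [hPorth j k hjk, mul_zero])
      (fun h => absurd (Finset.mem_range.mpr hk) h)]
    rw [hPP k]
    field_simp [(hnrm_pos k).ne']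
  have hK01int : ∀ n k, k < n →
      ∫ x, (K01poly n).eval x * (P k).eval x ∂μ = (derivative (P k)).eval a := by
    intro n k hk
    rw [hK01poly, inn0_sum]
    rw [Finset.sum_eq_single k
      (fun j _ hjk => by rw [hPorth j k hjk, mul_zero])
      (fun h => absurd (Finset.mem_range.mpr hk) h)]
    rw [hPP k]
    field_simp [(hnrm_pos k).ne']
  -- right linearity of innS over C-mul-sums
  have innS_sum : ∀ (p : ℝ[X]) (m : ℕ) (c : ℕ → ℝ) (f : ℕ → ℝ[X]),
      innS p (∑ k ∈ Finset.range m, Polynomial.C (c k) * f k)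
        = ∑ k ∈ Finset.range m, c k * innS p (f k) := by
    intro p m c f
    rw [hinnS]
    have h1 : (fun x => p.eval x * (∑ k ∈ Finset.range m, Polynomial.C (c k) * f k).eval x)
        = fun x => ∑ k ∈ Finset.range m, c k * (p.eval x * (f k).eval x) := by
      funext x
      rw [eval_finset_sum, Finset.mul_sum]
      exact Finset.sum_congr rfl fun k _ => by simp [Polynomial.eval_mul]; ring
    rw [h1, integral_finset_sum _ fun k _ => (hint2 p (f k)).const_mul (c k)]
    have h2 : (∑ k ∈ Finset.range m, Polynomial.C (c k) * f k).eval a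
        = ∑ k ∈ Finset.range m, c k * (f k).eval a := by
      rw [eval_finset_sum]; exact Finset.sum_congr rfl fun k _ => by simp
    have h3 : (derivative (∑ k ∈ Finset.range m, Polynomial.C (c k) * f k)).eval a
        = ∑ k ∈ Finset.range m, c k * (derivative (f k)).eval a := by
      rw [derivative_sum, eval_finset_sum]
      exact Finset.sum_congr rfl fun k _ => by rw [derivative_C_mul]; simp
    rw [h2, h3]
    simp only [hinnS]
    rw [Finset.mul_sum, Finset.mul_sum, ← Finset.sum_add_distrib, ← Finset.sum_add_distrib]
    refine Finset.sum_congr rfl fun k _ => ?_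
    rw [integral_const_mul]
    ring
  -- innS (Q n) p = 0 for degree p < n
  have hQlow : ∀ (n : ℕ) (p : ℝ[X]), p.degree < (n : ℕ) → innS (Q n) p = 0 := by
    intro n p hp
    obtain ⟨c, hc⟩ := monic_span Q hQmonic hQdeg n p hp
    rw [hc, innS_sum]
    refine Finset.sum_eq_zero fun k hk => ?_
    rw [hQorth n k (Finset.mem_range.mp hk).ne', mul_zero]
  -- degree of P k as WithBot
  have hPdegW : ∀ k, (P k).degree = (k : ℕ) := fun k => by
    rw [degree_eq_natDegree (hPmonic k).ne_zero, hPdeg k]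
  have hQdegW : ∀ k, (Q k).degree = (k : ℕ) := fun k => by
    rw [degree_eq_natDegree (hQmonic k).ne_zero, hQdeg k]
  intro n hn
  set A : ℝ := (Q n).eval a with hA
  set B : ℝ := (derivative (Q n)).eval a with hB
  -- ∫ Qn * Pk for k < n
  have hQP : ∀ k, k < n → ∫ x, (Q n).eval x * (P k).eval x ∂μ
      = -(M * A * (P k).eval a) - N * B * (derivative (P k)).eval a := by
    intro k hk
    have h0 := hQlow n (P k) (by rw [hPdegW k]; exact_mod_cast hk)
    rw [hinnS] at h0
    linarith
  -- the remainder polynomial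
  set S : ℝ[X] := Q n - (P n - Polynomial.C (M * A) * Kpoly n
      - Polynomial.C (N * B) * K01poly n) with hS
  -- degree bounds for kernels
  have degree_C_mul_le : ∀ (c : ℝ) (p : ℝ[X]), (Polynomial.C c * p).degree ≤ p.degree := by
    intro c p
    refine le_trans (degree_mul_le _ _) ?_
    calc (Polynomial.C c).degree + p.degree ≤ 0 + p.degree :=
          add_le_add degree_C_le le_rfl
      _ = p.degree := zero_add _
  have hKpdeg : (Kpoly n).degree < (n : ℕ) := by
    rw [hKpoly]
    refine lt_of_le_of_lt (degree_sum_le _ _) ((Finset.sup_lt_iff (WithBot.bot_lt_coe n)).mpr ?_)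
    intro k hk
    refine lt_of_le_of_lt (degree_C_mul_le _ _) ?_
    rw [hPdegW k]
    exact WithBot.coe_lt_coe.mpr (Finset.mem_range.mp hk)
  have hK01pdeg : (K01poly n).degree < (n : ℕ) := by
    rw [hK01poly]
    refine lt_of_le_of_lt (degree_sum_le _ _) ((Finset.sup_lt_iff (WithBot.bot_lt_coe n)).mpr ?_)
    intro k hk
    refine lt_of_le_of_lt (degree_C_mul_le _ _) ?_
    rw [hPdegW k]
    exact WithBot.coe_lt_coe.mpr (Finset.mem_range.mp hk)
  have hSdeg : S.degree < (n : ℕ) := by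
    have h1 : (Q n - P n).degree < (n : ℕ) := by
      rw [← hQdegW n]
      exact degree_sub_lt ((hQdegW n).trans (hPdegW n).symm) (hQmonic n).ne_zero
        (by rw [(hQmonic n).leadingCoeff, (hPmonic n).leadingCoeff])
    have hS' : S = (Q n - P n) + (Polynomial.C (M * A) * Kpoly n
        + Polynomial.C (N * B) * K01poly n) := by rw [hS]; ring
    rw [hS']
    refine lt_of_le_of_lt (degree_add_le _ _) (max_lt h1 ?_)
    refine lt_of_le_of_lt (degree_add_le _ _) (max_lt ?_ ?_)
    · exact lt_of_le_of_lt (degree_C_mul_le _ _) hKpdeg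
    · exact lt_of_le_of_lt (degree_C_mul_le _ _) hK01pdeg
  -- orthogonality of S to all P k, k < n
  have hSorth : ∀ k, k < n → ∫ x, S.eval x * (P k).eval x ∂μ = 0 := by
    intro k hk
    have hfun : (fun x => S.eval x * (P k).eval x)
        = fun x => (Q n).eval x * (P k).eval x - (P n).eval x * (P k).eval x
          + (M * A) * ((Kpoly n).eval x * (P k).eval x)
          + (N * B) * ((K01poly n).eval x * (P k).eval x) := by
      funext x
      rw [hS]
      simp [Polynomial.eval_mul]
      ring
    rw [hfun]
    have i1 : Integrable (fun x => (Q n).eval x * (P k).eval x) μ := hint2 _ _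
    have i2 : Integrable (fun x => (P n).eval x * (P k).eval x) μ := hint2 _ _
    have i3 : Integrable (fun x => (M * A) * ((Kpoly n).eval x * (P k).eval x)) μ :=
      (hint2 _ _).const_mul _
    have i4 : Integrable (fun x => (N * B) * ((K01poly n).eval x * (P k).eval x)) μ :=
      (hint2 _ _).const_mul _
    have i12 : Integrable (fun x => (Q n).eval x * (P k).eval x
        - (P n).eval x * (P k).eval x) μ := i1.sub i2
    have i123 : Integrable (fun x => ((Q n).eval x * (P k).eval x
        - (P n).eval x * (P k).eval x)
        + (M * A) * ((Kpoly n).eval x * (P k).eval x)) μ := i12.add i3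
    rw [integral_add i123 i4, integral_add i12 i3, integral_sub i1 i2,
      integral_const_mul, integral_const_mul,
      hQP k hk, hPorth n k (Nat.ne_of_gt hk), hKint n k hk, hK01int n k hk]
    ring
  -- S = 0
  have hS0 : S = 0 := by
    by_contra hS0
    have hpos := hμpos S hS0
    obtain ⟨c, hc⟩ := monic_span P hPmonic hPdeg n S hSdeg
    have hzero : ∫ x, (S.eval x) ^ 2 ∂μ = 0 := by
      have h1 : ∫ x, (S.eval x) ^ 2 ∂μ = ∫ x, S.eval x * S.eval x ∂μ :=
        integral_congr_ae (Filter.Eventually.of_forall fun x => sq (S.eval x))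
      rw [h1]
      nth_rewrite 1 [hc]
      rw [inn0_sum]
      refine Finset.sum_eq_zero fun k hk => ?_
      have : ∫ x, (P k).eval x * S.eval x ∂μ = ∫ x, S.eval x * (P k).eval x ∂μ :=
        integral_congr_ae (Filter.Eventually.of_forall fun x => mul_comm _ _)
      rw [this, hSorth k (Finset.mem_range.mp hk), mul_zero]
    exact absurd hzero (ne_of_gt hpos)
  have hQeq : Q n = P n - Polynomial.C (M * A) * Kpoly n
      - Polynomial.C (N * B) * K01poly n := by
    have := sub_eq_zero.mp (hS ▸ hS0)
    exact this
  -- evaluations of kernels at a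
  have hKa : (Kpoly n).eval a = Kd 0 0 n := by
    rw [hKpoly, hKd, eval_finset_sum]
    refine Finset.sum_congr rfl fun k _ => ?_
    simp [Polynomial.eval_mul]
    ring
  have hK01a : (K01poly n).eval a = Kd 1 0 n := by
    rw [hK01poly, hKd, eval_finset_sum]
    refine Finset.sum_congr rfl fun k _ => ?_
    simp [Polynomial.eval_mul]
    ring
  have hKa' : (derivative (Kpoly n)).eval a = Kd 0 1 n := by
    rw [hKpoly, hKd, derivative_sum, eval_finset_sum]
    refine Finset.sum_congr rfl fun k _ => ?_
    rw [derivative_C_mul]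
    simp [Polynomial.eval_mul]
    ring
  have hK01a' : (derivative (K01poly n)).eval a = Kd 1 1 n := by
    rw [hK01poly, hKd, derivative_sum, eval_finset_sum]
    refine Finset.sum_congr rfl fun k _ => ?_
    rw [derivative_C_mul]
    simp [Polynomial.eval_mul]
    ring
  have hKd10 : Kd 1 0 n = Kd 0 1 n := by
    rw [hKd, hKd]
    exact Finset.sum_congr rfl fun k _ => by ring
  -- the two linear equations
  have eqA : A = (P n).eval a - M * A * Kd 0 0 n - N * B * Kd 0 1 n := by
    have := congrArg (Polynomial.eval a) hQeq
    rw [eval_sub, eval_sub, Polynomial.eval_mul, Polynomial.eval_mul, eval_C, eval_C,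
      hKa, hK01a, hKd10] at this
    rw [hA] at this ⊢
    linarith
  have eqB : B = (derivative (P n)).eval a - M * A * Kd 0 1 n - N * B * Kd 1 1 n := by
    have := congrArg (Polynomial.eval a) (congrArg derivative hQeq)
    rw [derivative_sub, derivative_sub, derivative_C_mul, derivative_C_mul,
      eval_sub, eval_sub, Polynomial.eval_mul, Polynomial.eval_mul, eval_C, eval_C,
      hKa', hK01a'] at this
    rw [hB] at this ⊢
    linarith
  -- nonnegativity and Cauchy-Schwarz
  have hK00 : 0 ≤ Kd 0 0 n := by
    rw [hKd]
    refine Finset.sum_nonneg fun k _ => div_nonneg ?_ (hnrm_pos k).le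
    simpa using mul_self_nonneg ((P k).eval a)
  have hK11 : 0 ≤ Kd 1 1 n := by
    rw [hKd]
    refine Finset.sum_nonneg fun k _ => div_nonneg ?_ (hnrm_pos k).le
    simpa using mul_self_nonneg ((derivative (P k)).eval a)
  have hCS : (Kd 0 1 n) ^ 2 ≤ Kd 0 0 n * Kd 1 1 n := by
    have h := Finset.sum_mul_sq_le_sq_mul_sq (Finset.range n)
      (fun k => (P k).eval a / Real.sqrt (nrm k))
      (fun k => (derivative (P k)).eval a / Real.sqrt (nrm k))
    have e1 : ∑ k ∈ Finset.range n,
        ((P k).eval a / Real.sqrt (nrm k)) * ((derivative (P k)).eval a / Real.sqrt (nrm k))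
        = Kd 0 1 n := by
      rw [hKd]
      refine Finset.sum_congr rfl fun k _ => ?_
      rw [div_mul_div_comm, Real.mul_self_sqrt (hnrm_pos k).le]
      simp
    have e2 : ∑ k ∈ Finset.range n, ((P k).eval a / Real.sqrt (nrm k)) ^ 2 = Kd 0 0 n := by
      rw [hKd]
      refine Finset.sum_congr rfl fun k _ => ?_
      rw [div_pow, Real.sq_sqrt (hnrm_pos k).le]
      simp [sq]
    have e3 : ∑ k ∈ Finset.range n,
        ((derivative (P k)).eval a / Real.sqrt (nrm k)) ^ 2 = Kd 1 1 n := by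
      rw [hKd]
      refine Finset.sum_congr rfl fun k _ => ?_
      rw [div_pow, Real.sq_sqrt (hnrm_pos k).le]
      simp [sq]
    rw [e1, e2, e3] at h
    exact h
  have hD : 0 < (1 + M * Kd 0 0 n) * (1 + N * Kd 1 1 n) - M * N * Kd 1 0 n * Kd 0 1 n := by
    rw [hKd10]
    nlinarith [mul_pos hM hN, mul_nonneg (mul_pos hM hN).le (sub_nonneg.mpr hCS),
      mul_nonneg hM.le hK00, mul_nonneg hN.le hK11]
  refine ⟨hD, ?_, ?_⟩
  · rw [eq_div_iff (ne_of_gt hD), hKd10]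
    linear_combination (1 + N * Kd 1 1 n) * eqA + (-(N * Kd 0 1 n)) * eqB
  · rw [eq_div_iff (ne_of_gt hD), hKd10]
    linear_combination (-(M * Kd 0 1 n)) * eqA + (1 + M * Kd 0 0 n) * eqB
end

section
/- For every n ≥ 1, the Sobolev orthogonal polynomial admits the determinantal representation Q_n^{M,N}(x) = det A_n(x) / det B_n, where A_n(x) is the 3×3 matrix with rows (P_n(x), M K_{n−1}(x,a), N K_{n−1}^{(0,1)}(x,a)), (P_n(a), 1 + M K_{n−1}(a,a), N K_{n−1}^{(0,1)}(a,a)), (P_n′(a), M K_{n−1}^{(0,1)}(a,a), 1 + N K_{n−1}^{(1,1)}(a,a)), and B_n is the 2×2 matrix with rows (1 + M K_{n−1}(a,a), N K_{n−1}^{(0,1)}(a,a)), (M K_{n−1}^{(0,1)}(a,a), 1 + N K_{n−1}^{(1,1)}(a,a)). -/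
open MeasureTheory Polynomial Matrix

private lemma degC_mul_le (a : ℝ) (p : ℝ[X]) : (Polynomial.C a * p).degree ≤ p.degree := by
  rcases eq_or_ne a 0 with h | h
  · simp [h]
  · exact le_of_eq (Polynomial.degree_C_mul h)

private lemma repr_of_degree_lt (P : ℕ → ℝ[X]) (hm : ∀ k, (P k).Monic)
    (hd : ∀ k, (P k).natDegree = k) :
    ∀ (n : ℕ) (q : ℝ[X]), q.degree < (n : ℕ) →
      ∃ c : ℕ → ℝ, q = ∑ k ∈ Finset.range n, Polynomial.C (c k) * P k := by
  intro n
  induction n with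
  | zero =>
    intro q hq
    have hq0 : q = 0 := by
      by_contra h0
      exact absurd (Polynomial.zero_le_degree_iff.mpr h0) (not_le.mpr (by simpa using hq))
    exact ⟨fun _ => 0, by simp [hq0]⟩
  | succ n ih =>
    intro q hq
    by_cases h : q.degree < (n : ℕ)
    · obtain ⟨c, hc⟩ := ih q h
      refine ⟨fun k => if k = n then 0 else c k, ?_⟩
      rw [Finset.sum_range_succ]
      beta_reduce
      rw [if_pos rfl, hc]
      simp only [Polynomial.C_0, zero_mul, add_zero]
      exact Finset.sum_congr rfl fun k hk => by
        rw [if_neg (Nat.ne_of_lt (Finset.mem_range.mp hk))]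
    · push_neg at h
      have hq0 : q ≠ 0 := by
        intro h0; rw [h0, Polynomial.degree_zero] at h; exact absurd h (by simp)
      have hnd : q.natDegree = n := by
        have h1 : q.natDegree < n + 1 := (Polynomial.natDegree_lt_iff_degree_lt hq0).mpr (by exact_mod_cast hq)
        have h2 : ¬ q.natDegree < n := fun hc =>
          absurd ((Polynomial.natDegree_lt_iff_degree_lt hq0).mp hc) (not_lt.mpr h)
        omega
      have hPn0 : P n ≠ 0 := (hm n).ne_zero
      have hlc : q.leadingCoeff ≠ 0 := Polynomial.leadingCoeff_ne_zero.mpr hq0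
      have hdeg1 : q.degree = (Polynomial.C q.leadingCoeff * P n).degree := by
        rw [Polynomial.degree_C_mul hlc, Polynomial.degree_eq_natDegree hq0,
          Polynomial.degree_eq_natDegree hPn0, hnd, hd n]
      have hlc2 : q.leadingCoeff = (Polynomial.C q.leadingCoeff * P n).leadingCoeff := by
        rw [Polynomial.leadingCoeff_mul, Polynomial.leadingCoeff_C, (hm n).leadingCoeff, mul_one]
      have hsub : (q - Polynomial.C q.leadingCoeff * P n).degree < (n : ℕ) := by
        have := Polynomial.degree_sub_lt hdeg1 hq0 hlc2
        rwa [Polynomial.degree_eq_natDegree hq0, hnd] at this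
      obtain ⟨c, hc⟩ := ih _ hsub
      refine ⟨fun k => if k = n then q.leadingCoeff else c k, ?_⟩
      rw [Finset.sum_range_succ]
      beta_reduce
      rw [if_pos rfl]
      have he : ∑ k ∈ Finset.range n, Polynomial.C (if k = n then q.leadingCoeff else c k) * P k
          = ∑ k ∈ Finset.range n, Polynomial.C (c k) * P k :=
        Finset.sum_congr rfl fun k hk => by
          rw [if_neg (Nat.ne_of_lt (Finset.mem_range.mp hk))]
      rw [he, ← hc]
      ring

private lemma det_expand (p k1 k2 : ℝ[X]) (pa pda k00 k01 k11 M N : ℝ) :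
    Matrix.det !![p, Polynomial.C M * k1, Polynomial.C N * k2;
       Polynomial.C pa, Polynomial.C (1 + M*k00), Polynomial.C (N*k01);
       Polynomial.C pda, Polynomial.C (M*k01), Polynomial.C (1+N*k11)]
    = Polynomial.C ((1+M*k00)*(1+N*k11) - N*k01*(M*k01)) * p
      + Polynomial.C (M*(N*k01*pda - pa*(1+N*k11))) * k1
      + Polynomial.C (N*(pa*(M*k01) - (1+M*k00)*pda)) * k2 := by
  simp only [Matrix.det_fin_three, Matrix.cons_val', Matrix.cons_val_zero, Matrix.cons_val_one,
    Matrix.head_cons, Matrix.empty_val', Matrix.cons_val_fin_one, Matrix.cons_val_two,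
    Matrix.tail_cons, Matrix.head_fin_const, Matrix.of_apply]
  simp only [map_add, _root_.map_mul, map_sub, _root_.map_one]
  ring

set_option maxHeartbeats 2000000 in
theorem sobolev_determinantal_representation
    (μ : MeasureTheory.Measure ℝ) (E : Set ℝ) (a : ℝ)
    (hEc : IsCompact E) (hEinf : E.Infinite) (haE : a ∉ E) (hEsupp : μ Eᶜ = 0)
    (hμint : ∀ p : ℝ[X], MeasureTheory.Integrable (fun x => p.eval x) μ)
    (hμpos : ∀ p : ℝ[X], p ≠ 0 → 0 < ∫ x, (p.eval x) ^ 2 ∂μ)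
    (P : ℕ → ℝ[X])
    (hPmonic : ∀ n, (P n).Monic)
    (hPdeg : ∀ n, (P n).natDegree = n)
    (hPorth : ∀ m n, m ≠ n → ∫ x, (P m).eval x * (P n).eval x ∂μ = 0)
    (nrm : ℕ → ℝ) (hnrm : ∀ k, nrm k = ∫ x, ((P k).eval x) ^ 2 ∂μ)
    (M N : ℝ) (hM : 0 < M) (hN : 0 < N)
    (innS : ℝ[X] → ℝ[X] → ℝ)
    (hinnS : ∀ p q : ℝ[X], innS p q = (∫ x, p.eval x * q.eval x ∂μ)
      + M * p.eval a * q.eval a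
      + N * (derivative p).eval a * (derivative q).eval a)
    (Q : ℕ → ℝ[X])
    (hQmonic : ∀ n, (Q n).Monic)
    (hQdeg : ∀ n, (Q n).natDegree = n)
    (hQorth : ∀ m n, m ≠ n → innS (Q m) (Q n) = 0)
    (Kpoly K01poly : ℕ → ℝ[X])
    (hKpoly : ∀ n, Kpoly n
      = ∑ k ∈ Finset.range n, Polynomial.C ((P k).eval a / nrm k) * P k)
    (hK01poly : ∀ n, K01poly n
      = ∑ k ∈ Finset.range n, Polynomial.C ((derivative (P k)).eval a / nrm k) * P k)
    (Kd : ℕ → ℕ → ℕ → ℝ)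
    (hKd : ∀ i j n, Kd i j n
      = ∑ k ∈ Finset.range n,
          ((⇑(derivative (R := ℝ)))^[i] (P k)).eval a
            * ((⇑(derivative (R := ℝ)))^[j] (P k)).eval a / nrm k)
    : ∀ n, 1 ≤ n →
      Q n = Polynomial.C
          (Matrix.det !![1 + M * Kd 0 0 n, N * Kd 0 1 n;
                         M * Kd 0 1 n, 1 + N * Kd 1 1 n])⁻¹
        * Matrix.det
            !![P n, Polynomial.C M * Kpoly n, Polynomial.C N * K01poly n;
               Polynomial.C ((P n).eval a), Polynomial.C (1 + M * Kd 0 0 n),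
                 Polynomial.C (N * Kd 0 1 n);
               Polynomial.C ((derivative (P n)).eval a), Polynomial.C (M * Kd 0 1 n),
                 Polynomial.C (1 + N * Kd 1 1 n)] := by
  intro n hn
  -- basic facts
  have hnrmpos : ∀ k, 0 < nrm k := fun k => by
    rw [hnrm]; exact hμpos _ (hPmonic k).ne_zero
  have hnrm0 : ∀ k, nrm k ≠ 0 := fun k => (hnrmpos k).ne'
  have hint2 : ∀ p q : ℝ[X], Integrable (fun x => p.eval x * q.eval x) μ := fun p q => by
    simpa [Polynomial.eval_mul] using hμint (p * q)
  have hPP : ∀ k j, ∫ x, (P k).eval x * (P j).eval x ∂μ = if k = j then nrm k else 0 := by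
    intro k j
    by_cases h : k = j
    · subst h
      rw [if_pos rfl, hnrm k]
      simp_rw [← sq]
    · rw [if_neg h]; exact hPorth k j h
  -- integral of a combination against P k
  have hsumint : ∀ (m : ℕ) (f : ℕ → ℝ) (k : ℕ), k < m →
      ∫ x, (∑ j ∈ Finset.range m, Polynomial.C (f j) * P j).eval x * (P k).eval x ∂μ
        = f k * nrm k := by
    intro m f k hk
    have hev : ∀ x : ℝ, (∑ j ∈ Finset.range m, Polynomial.C (f j) * P j).eval x * (P k).eval x
        = ∑ j ∈ Finset.range m, f j * ((P j).eval x * (P k).eval x) := by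
      intro x
      rw [Polynomial.eval_finset_sum, Finset.sum_mul]
      exact Finset.sum_congr rfl fun j _ => by simp; ring
    simp_rw [hev]
    rw [integral_finset_sum _ (fun j _ => (hint2 (P j) (P k)).const_mul (f j))]
    have : ∀ j ∈ Finset.range m, (∫ x, f j * ((P j).eval x * (P k).eval x) ∂μ)
        = if j = k then f k * nrm k else 0 := by
      intro j _
      rw [integral_const_mul, hPP j k]
      by_cases h : j = k
      · subst h; simp
      · simp [h]
    rw [Finset.sum_congr rfl this, Finset.sum_ite_eq' (Finset.range m) k,
      if_pos (Finset.mem_range.mpr hk)]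
  -- degree of combinations
  have hdegsum : ∀ (m : ℕ) (f : ℕ → ℝ),
      (∑ k ∈ Finset.range m, Polynomial.C (f k) * P k).degree < (m : ℕ) := by
    intro m f
    refine lt_of_le_of_lt (Polynomial.degree_sum_le _ _) ?_
    refine (Finset.sup_lt_iff (by exact_mod_cast WithBot.bot_lt_coe m)).mpr ?_
    intro k hk
    refine lt_of_le_of_lt (degC_mul_le _ _) ?_
    rw [Polynomial.degree_eq_natDegree (hPmonic k).ne_zero, hPdeg k]
    exact_mod_cast Finset.mem_range.mp hk
  -- concrete forms of the kernel values
  have hK00 : Kd 0 0 n = ∑ k ∈ Finset.range n, (P k).eval a * (P k).eval a / nrm k := by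
    rw [hKd]; simp
  have hK01 : Kd 0 1 n = ∑ k ∈ Finset.range n, (P k).eval a * (derivative (P k)).eval a / nrm k := by
    rw [hKd]; simp
  have hK11 : Kd 1 1 n
      = ∑ k ∈ Finset.range n, (derivative (P k)).eval a * (derivative (P k)).eval a / nrm k := by
    rw [hKd]; simp
  -- positivity of the 2x2 determinant
  have h00 : 0 ≤ Kd 0 0 n := by
    rw [hK00]
    exact Finset.sum_nonneg fun k _ => div_nonneg (mul_self_nonneg _) (hnrmpos k).le
  have h11 : 0 ≤ Kd 1 1 n := by
    rw [hK11]
    exact Finset.sum_nonneg fun k _ => div_nonneg (mul_self_nonneg _) (hnrmpos k).le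
  have hcs : (Kd 0 1 n) ^ 2 ≤ Kd 0 0 n * Kd 1 1 n := by
    rw [hK00, hK01, hK11]
    have h1 : ∀ k, (P k).eval a * (derivative (P k)).eval a / nrm k
        = ((P k).eval a / Real.sqrt (nrm k)) * ((derivative (P k)).eval a / Real.sqrt (nrm k)) := by
      intro k
      rw [div_mul_div_comm, Real.mul_self_sqrt (hnrmpos k).le]
    have h2 : ∀ k, (P k).eval a * (P k).eval a / nrm k
        = ((P k).eval a / Real.sqrt (nrm k)) ^ 2 := by
      intro k
      rw [div_pow, sq, sq, Real.mul_self_sqrt (hnrmpos k).le]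
    have h3 : ∀ k, (derivative (P k)).eval a * (derivative (P k)).eval a / nrm k
        = ((derivative (P k)).eval a / Real.sqrt (nrm k)) ^ 2 := by
      intro k
      rw [div_pow, sq, sq, Real.mul_self_sqrt (hnrmpos k).le]
    simp_rw [h1, h2, h3]
    exact Finset.sum_mul_sq_le_sq_mul_sq _ _ _
  have hD : 0 < (1 + M * Kd 0 0 n) * (1 + N * Kd 1 1 n) - N * Kd 0 1 n * (M * Kd 0 1 n) := by
    nlinarith [mul_nonneg (mul_nonneg hM.le hN.le) (sub_nonneg.mpr hcs),
      mul_nonneg hM.le h00, mul_nonneg hN.le h11]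
  set pa := (P n).eval a with hpa
  set pda := (derivative (P n)).eval a with hpda
  set D : ℝ := (1 + M * Kd 0 0 n) * (1 + N * Kd 1 1 n) - N * Kd 0 1 n * (M * Kd 0 1 n) with hDdef
  have hD0 : D ≠ 0 := hD.ne'
  set u : ℝ := D⁻¹ * (M * (N * Kd 0 1 n * pda - pa * (1 + N * Kd 1 1 n))) with hu
  set v : ℝ := D⁻¹ * (N * (pa * (M * Kd 0 1 n) - (1 + M * Kd 0 0 n) * pda)) with hv
  set R : ℝ[X] := P n + (Polynomial.C u * Kpoly n + Polynomial.C v * K01poly n) with hR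
  -- evaluations of R
  have hKpa : (Kpoly n).eval a = Kd 0 0 n := by
    rw [hKpoly, hK00, Polynomial.eval_finset_sum]
    exact Finset.sum_congr rfl fun k _ => by simp; ring
  have hK01pa : (K01poly n).eval a = Kd 0 1 n := by
    rw [hK01poly, hK01, Polynomial.eval_finset_sum]
    exact Finset.sum_congr rfl fun k _ => by simp; ring
  have hdKp : (derivative (Kpoly n)).eval a = Kd 0 1 n := by
    rw [hKpoly, Polynomial.derivative_sum, hK01, Polynomial.eval_finset_sum]
    exact Finset.sum_congr rfl fun k _ => by
      rw [Polynomial.derivative_C_mul]; simp; ring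
  have hdK01p : (derivative (K01poly n)).eval a = Kd 1 1 n := by
    rw [hK01poly, Polynomial.derivative_sum, hK11, Polynomial.eval_finset_sum]
    exact Finset.sum_congr rfl fun k _ => by
      rw [Polynomial.derivative_C_mul]; simp; ring
  have hRa : R.eval a = pa + u * Kd 0 0 n + v * Kd 0 1 n := by
    rw [hR]; simp [hKpa, hK01pa]; ring
  have hRda : (derivative R).eval a = pda + u * Kd 0 1 n + v * Kd 1 1 n := by
    rw [hR]
    simp only [Polynomial.derivative_add, Polynomial.derivative_C_mul, Polynomial.eval_add,
      Polynomial.eval_mul, Polynomial.eval_C, hdKp, hdK01p]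
    ring
  -- the key scalar identities
  have key1 : u + M * (pa + u * Kd 0 0 n + v * Kd 0 1 n) = 0 := by
    rw [hu, hv]
    field_simp
    rw [hDdef]
    ring
  have key2 : v + N * (pda + u * Kd 0 1 n + v * Kd 1 1 n) = 0 := by
    rw [hu, hv]
    field_simp
    rw [hDdef]
    ring
  -- innS R (P k) = 0 for k < n
  have hRPk : ∀ k, k < n → innS R (P k) = 0 := by
    intro k hk
    have hI : ∫ x, R.eval x * (P k).eval x ∂μ
        = u * (P k).eval a + v * (derivative (P k)).eval a := by
      have hev : ∀ x : ℝ, R.eval x * (P k).eval x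
          = (P n).eval x * (P k).eval x
            + (u * ((Kpoly n).eval x * (P k).eval x)
              + v * ((K01poly n).eval x * (P k).eval x)) := by
        intro x; rw [hR]; simp; ring
      simp_rw [hev]
      have hiB : Integrable (fun x => u * ((Kpoly n).eval x * (P k).eval x)) μ :=
        (hint2 (Kpoly n) (P k)).const_mul u
      have hiC : Integrable (fun x => v * ((K01poly n).eval x * (P k).eval x)) μ :=
        (hint2 (K01poly n) (P k)).const_mul v
      have hiBC : Integrable (fun x => u * ((Kpoly n).eval x * (P k).eval x)
          + v * ((K01poly n).eval x * (P k).eval x)) μ := hiB.add hiC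
      rw [integral_add (hint2 (P n) (P k)) hiBC, integral_add hiB hiC,
        integral_const_mul, integral_const_mul]
      rw [hPP n k, if_neg (by omega)]
      rw [hKpoly, hsumint n _ k hk, hK01poly, hsumint n _ k hk]
      rw [div_mul_cancel₀ _ (hnrm0 k), div_mul_cancel₀ _ (hnrm0 k)]
      ring
    rw [hinnS, hI, hRa, hRda]
    linear_combination (P k).eval a * key1 + (derivative (P k)).eval a * key2
  -- linearity of innS in the second argument over combinations
  have hinnS_sum : ∀ (p : ℝ[X]) (m : ℕ) (c : ℕ → ℝ) (F : ℕ → ℝ[X]),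
      innS p (∑ k ∈ Finset.range m, Polynomial.C (c k) * F k)
        = ∑ k ∈ Finset.range m, c k * innS p (F k) := by
    intro p m c F
    rw [hinnS]
    have hev : ∀ x : ℝ, p.eval x * (∑ k ∈ Finset.range m, Polynomial.C (c k) * F k).eval x
        = ∑ k ∈ Finset.range m, c k * (p.eval x * (F k).eval x) := by
      intro x
      rw [Polynomial.eval_finset_sum, Finset.mul_sum]
      exact Finset.sum_congr rfl fun k _ => by simp; ring
    simp_rw [hev]
    rw [integral_finset_sum _ (fun k _ => (hint2 p (F k)).const_mul (c k))]
    simp_rw [integral_const_mul]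
    rw [Polynomial.derivative_sum, Polynomial.eval_finset_sum, Polynomial.eval_finset_sum]
    simp_rw [Polynomial.derivative_C_mul, Polynomial.eval_mul, Polynomial.eval_C,
      Finset.mul_sum, hinnS]
    rw [← Finset.sum_add_distrib, ← Finset.sum_add_distrib]
    exact Finset.sum_congr rfl fun k _ => by ring
  -- orthogonality of Q n and of R to all polynomials of degree < n
  have hQlow : ∀ q : ℝ[X], q.degree < (n : ℕ) → innS (Q n) q = 0 := by
    intro q hq
    obtain ⟨c, rfl⟩ := repr_of_degree_lt Q hQmonic hQdeg n q hq
    rw [hinnS_sum]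
    exact Finset.sum_eq_zero fun k hk => by
      rw [hQorth n k (by have := Finset.mem_range.mp hk; omega), mul_zero]
  have hRlow : ∀ q : ℝ[X], q.degree < (n : ℕ) → innS R q = 0 := by
    intro q hq
    obtain ⟨c, rfl⟩ := repr_of_degree_lt P hPmonic hPdeg n q hq
    rw [hinnS_sum]
    exact Finset.sum_eq_zero fun k hk => by
      rw [hRPk k (Finset.mem_range.mp hk), mul_zero]
  -- R is monic of degree n
  have hPndeg : (P n).degree = (n : ℕ) := by
    rw [Polynomial.degree_eq_natDegree (hPmonic n).ne_zero, hPdeg]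
  have hsdeg : (Polynomial.C u * Kpoly n + Polynomial.C v * K01poly n).degree < (n : ℕ) := by
    refine lt_of_le_of_lt (Polynomial.degree_add_le _ _) (max_lt ?_ ?_)
    · exact lt_of_le_of_lt (degC_mul_le _ _) (by rw [hKpoly]; exact hdegsum n _)
    · exact lt_of_le_of_lt (degC_mul_le _ _) (by rw [hK01poly]; exact hdegsum n _)
  have hRmonic : R.Monic := by
    rw [hR]
    exact (hPmonic n).add_of_left (by rw [hPndeg]; exact hsdeg)
  have hRdeg : R.degree = (n : ℕ) := by
    rw [hR, Polynomial.degree_add_eq_left_of_degree_lt (by rw [hPndeg]; exact hsdeg), hPndeg]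
  -- uniqueness: Q n = R
  have hQR : Q n = R := by
    by_contra hne
    have hDne : Q n - R ≠ 0 := sub_ne_zero.mpr hne
    have hQndeg : (Q n).degree = (n : ℕ) := by
      rw [Polynomial.degree_eq_natDegree (hQmonic n).ne_zero, hQdeg]
    have hdlt : (Q n - R).degree < (n : ℕ) := by
      have := Polynomial.degree_sub_lt (hQndeg.trans hRdeg.symm) (hQmonic n).ne_zero
        (by rw [(hQmonic n).leadingCoeff, hRmonic.leadingCoeff])
      rwa [hQndeg] at this
    have h2 := hQlow _ hdlt
    have h3 := hRlow _ hdlt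
    have h4 : innS (Q n - R) (Q n - R) = 0 := by
      rw [hinnS] at h2 h3 ⊢
      have hi : ∫ x, (Q n - R).eval x * (Q n - R).eval x ∂μ
          = (∫ x, (Q n).eval x * (Q n - R).eval x ∂μ)
            - ∫ x, R.eval x * (Q n - R).eval x ∂μ := by
        rw [← integral_sub (hint2 (Q n) (Q n - R)) (hint2 R (Q n - R))]
        congr 1
        funext x
        simp only [Polynomial.eval_sub]
        ring
      rw [hi]
      simp only [Polynomial.eval_sub, Polynomial.derivative_sub] at h2 h3 ⊢
      linear_combination h2 - h3
    have hpos := hμpos (Q n - R) hDne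
    rw [hinnS] at h4
    have hIx : ∫ x, (Q n - R).eval x * (Q n - R).eval x ∂μ
        = ∫ x, ((Q n - R).eval x) ^ 2 ∂μ := by
      simp_rw [← sq]
    rw [hIx] at h4
    rw [mul_assoc M, mul_assoc N] at h4
    have t1 : 0 ≤ M * ((Q n - R).eval a * (Q n - R).eval a) :=
      mul_nonneg hM.le (mul_self_nonneg _)
    have t2 : 0 ≤ N * ((derivative (Q n - R)).eval a * (derivative (Q n - R)).eval a) :=
      mul_nonneg hN.le (mul_self_nonneg _)
    linarith [hpos, h4, t1, t2]
  -- assembling the determinantal formula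
  rw [Matrix.det_fin_two_of, det_expand, hQR, hR]
  have hd' : (1 + M * Kd 0 0 n) * (1 + N * Kd 1 1 n) - N * Kd 0 1 n * (M * Kd 0 1 n) = D := by
    rw [hDdef]
  rw [hd', hu, hv]
  have hCD : Polynomial.C D⁻¹ * Polynomial.C D = 1 := by
    rw [← Polynomial.C_mul, inv_mul_cancel₀ hD0, Polynomial.C_1]
  simp only [Polynomial.C_mul]
  linear_combination (-(P n)) * hCD
end

section
/- For every n ≥ 2, the Fourier coefficient numerator in the expansion of (x−a)² Q_n^{M,N} satisfies ⟨(x−a)² Q_n^{M,N}, P_{n+1}^{gg}⟩_gg = B_{n+1} ‖P_n‖₀² − C_{n+1} (M Q_n^{M,N}(a) P_{n−1}(a) + N (Q_n^{M,N})′(a) P_{n−1}′(a)). -/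
open MeasureTheory Polynomial Matrix

private lemma integral_eval_add (μ : MeasureTheory.Measure ℝ)
    (h : ∀ p : ℝ[X], MeasureTheory.Integrable (fun x => p.eval x) μ) (p q : ℝ[X]) :
    ∫ x, (p + q).eval x ∂μ = (∫ x, p.eval x ∂μ) + ∫ x, q.eval x ∂μ := by
  simp only [eval_add]
  exact integral_add (h p) (h q)

private lemma integral_eval_Cmul (μ : MeasureTheory.Measure ℝ) (c : ℝ) (p : ℝ[X]) :
    ∫ x, (Polynomial.C c * p).eval x ∂μ = c * ∫ x, p.eval x ∂μ := by
  simp only [eval_mul, eval_C]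
  exact integral_const_mul c _

private lemma F_lower {F : ℝ[X] → ℝ}
    (Fadd : ∀ p q, F (p + q) = F p + F q)
    (Fsmul : ∀ (c : ℝ) p, F (Polynomial.C c * p) = c * F p)
    (R : ℕ → ℝ[X]) (hmon : ∀ k, (R k).Monic) (hdeg : ∀ k, (R k).natDegree = k)
    (n : ℕ) (Forth : ∀ m, m < n → F (R m) = 0) :
    ∀ d : ℕ, ∀ r : ℝ[X], r.natDegree ≤ d → r.natDegree < n → F r = 0 := by
  have F0 : F 0 = 0 := by
    have := Fsmul 0 0
    simpa using this
  intro d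
  induction d using Nat.strong_induction_on with
  | _ d ih =>
    intro r hrd hrn
    by_cases h0 : r = 0
    · simp [h0, F0]
    set lc := r.leadingCoeff with hlcdef
    have hlc : lc ≠ 0 := leadingCoeff_ne_zero.mpr h0
    set s := r - Polynomial.C lc * R r.natDegree with hs
    have hrw : r = Polynomial.C lc * R r.natDegree + s := by rw [hs]; ring
    have hFR : F (R r.natDegree) = 0 := Forth _ hrn
    have hmain : F r = lc * F (R r.natDegree) + F s := by
      conv_lhs => rw [hrw]
      rw [Fadd, Fsmul]
    by_cases hs0 : s = 0
    · rw [hmain, hFR, hs0, F0]; ring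
    · have hq0 : Polynomial.C lc * R r.natDegree ≠ 0 :=
        mul_ne_zero (by simpa using hlc) (hmon _).ne_zero
      have hdq : (Polynomial.C lc * R r.natDegree).degree = r.degree := by
        rw [degree_eq_natDegree hq0, degree_eq_natDegree h0,
          natDegree_C_mul hlc, hdeg]
      have hlcq : r.leadingCoeff = (Polynomial.C lc * R r.natDegree).leadingCoeff := by
        rw [leadingCoeff_mul, leadingCoeff_C, (hmon _).leadingCoeff, mul_one]
      have hdlt : s.degree < r.degree := degree_sub_lt hdq.symm h0 hlcq
      have hns : s.natDegree < r.natDegree := by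
        have := (natDegree_lt_iff_degree_lt hs0 (n := r.natDegree)).mpr
          (by rwa [← degree_eq_natDegree h0])
        exact this
      have hFs : F s = 0 := ih s.natDegree (lt_of_lt_of_le hns hrd) s le_rfl
        (lt_trans hns hrn)
      rw [hmain, hFR, hFs]; ring
theorem fourier_coefficient_numerator_n_plus_one
    (μ μgg : MeasureTheory.Measure ℝ) (E : Set ℝ) (a : ℝ)
    (hEc : IsCompact E) (hEinf : E.Infinite) (haE : a ∉ E) (hEsupp : μ Eᶜ = 0)
    (hμint : ∀ p : ℝ[X], MeasureTheory.Integrable (fun x => p.eval x) μ)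
    (hμpos : ∀ p : ℝ[X], p ≠ 0 → 0 < ∫ x, (p.eval x) ^ 2 ∂μ)
    (P : ℕ → ℝ[X])
    (hPmonic : ∀ n, (P n).Monic)
    (hPdeg : ∀ n, (P n).natDegree = n)
    (hPorth : ∀ m n, m ≠ n → ∫ x, (P m).eval x * (P n).eval x ∂μ = 0)
    (nrm : ℕ → ℝ) (hnrm : ∀ k, nrm k = ∫ x, ((P k).eval x) ^ 2 ∂μ)
    (hμggint : ∀ p : ℝ[X], MeasureTheory.Integrable (fun x => p.eval x) μgg)
    (hμgg : ∀ p : ℝ[X], ∫ x, p.eval x * (x - a) ^ 2 ∂μgg = ∫ x, p.eval x ∂μ)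
    (M₁ : Matrix (Fin 2) (Fin 2) ℝ) (hM₁ : M₁.IsSymm)
    (inn : ℝ[X] → ℝ[X] → ℝ)
    (hinn : ∀ p q : ℝ[X], inn p q = (∫ x, p.eval x * q.eval x ∂μgg)
      + ![p.eval a, (derivative p).eval a] ⬝ᵥ
          M₁.mulVec ![q.eval a, (derivative q).eval a])
    (hinnpos : ∀ p : ℝ[X], p ≠ 0 → 0 < inn p p)
    (Pgg : ℕ → ℝ[X])
    (hGmonic : ∀ n, (Pgg n).Monic)
    (hGdeg : ∀ n, (Pgg n).natDegree = n)
    (hGorth : ∀ m n, m ≠ n → inn (Pgg m) (Pgg n) = 0)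
    (B C' : ℕ → ℝ)
    (hconn1 : Pgg 1 = P 1 + Polynomial.C (B 1) * P 0)
    (hconn : ∀ n, 2 ≤ n →
      Pgg n = P n + Polynomial.C (B n) * P (n - 1) + Polynomial.C (C' n) * P (n - 2))
    (hC' : ∀ n, 2 ≤ n → C' n ≠ 0)
    (M N : ℝ) (hM : 0 < M) (hN : 0 < N)
    (innS : ℝ[X] → ℝ[X] → ℝ)
    (hinnS : ∀ p q : ℝ[X], innS p q = (∫ x, p.eval x * q.eval x ∂μ)
      + M * p.eval a * q.eval a
      + N * (derivative p).eval a * (derivative q).eval a)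
    (Q : ℕ → ℝ[X])
    (hQmonic : ∀ n, (Q n).Monic)
    (hQdeg : ∀ n, (Q n).natDegree = n)
    (hQorth : ∀ m n, m ≠ n → innS (Q m) (Q n) = 0)
    : ∀ n, 2 ≤ n →
      inn ((X - Polynomial.C a) ^ 2 * Q n) (Pgg (n + 1))
        = B (n + 1) * nrm n
          - C' (n + 1) * (M * (Q n).eval a * (P (n - 1)).eval a
              + N * (derivative (Q n)).eval a * (derivative (P (n - 1))).eval a) := by

  intro n hn
  -- abbreviations
  have hn1 : 2 ≤ n + 1 := by omega
  have hc : Pgg (n + 1) = P (n + 1) + Polynomial.C (B (n + 1)) * P n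
      + Polynomial.C (C' (n + 1)) * P (n - 1) := by
    have := hconn (n + 1) hn1
    have h1 : n + 1 - 1 = n := by omega
    have h2 : n + 1 - 2 = n - 1 := by omega
    rwa [h1, h2] at this
  -- Step A: the extra matrix term vanishes
  set p₀ : ℝ[X] := (X - Polynomial.C a) ^ 2 * Q n with hp₀
  have hpa : p₀.eval a = 0 := by simp [hp₀]
  have hpa' : (derivative p₀).eval a = 0 := by
    simp [hp₀, derivative_mul, derivative_pow]
  have hA : inn p₀ (Pgg (n + 1)) = ∫ x, p₀.eval x * (Pgg (n + 1)).eval x ∂μgg := by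
    rw [hinn, hpa, hpa']
    simp [dotProduct]
  -- Step B: transfer from μgg to μ
  have hB : (∫ x, p₀.eval x * (Pgg (n + 1)).eval x ∂μgg)
      = ∫ x, (Q n * Pgg (n + 1)).eval x ∂μ := by
    rw [← hμgg (Q n * Pgg (n + 1))]
    congr 1
    funext x
    simp [hp₀]
    ring
  -- generic lemma instances for the measure μ
  -- Step D: ∫ Qn * P(n+1) dμ = 0
  have hD : (∫ x, (Q n * P (n + 1)).eval x ∂μ) = 0 := by
    have := F_lower (F := fun q => ∫ x, (q * P (n + 1)).eval x ∂μ)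
      (fun p q => by beta_reduce; rw [add_mul]; exact integral_eval_add μ hμint _ _)
      (fun c p => by beta_reduce; rw [mul_assoc]; exact integral_eval_Cmul μ c _)
      P hPmonic hPdeg (n + 1)
      (fun m hm => by
        have := hPorth m (n + 1) (by omega)
        simpa [eval_mul] using this)
      n (Q n) (le_of_eq (hQdeg n)) (by rw [hQdeg]; omega)
    exact this
  -- Step E: ∫ Qn * Pn dμ = nrm n
  have hE : (∫ x, (Q n * P n).eval x ∂μ) = nrm n := by
    have hsubdeg : (Q n - P n).natDegree < n := by
      by_cases h : Q n = P n
      · simp [h]; omega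
      · have hdq : (P n).degree = (Q n).degree := by
          rw [degree_eq_natDegree (hPmonic n).ne_zero,
            degree_eq_natDegree (hQmonic n).ne_zero, hPdeg, hQdeg]
        have hdlt : (Q n - P n).degree < (Q n).degree :=
          degree_sub_lt hdq.symm (hQmonic n).ne_zero
            (by rw [(hQmonic n).leadingCoeff, (hPmonic n).leadingCoeff])
        have := (natDegree_lt_iff_degree_lt (sub_ne_zero.mpr h) (n := n)).mpr
          (by rwa [degree_eq_natDegree (hQmonic n).ne_zero, hQdeg] at hdlt)
        exact this
    have hzero : (∫ x, ((Q n - P n) * P n).eval x ∂μ) = 0 := by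
      have := F_lower (F := fun q => ∫ x, (q * P n).eval x ∂μ)
        (fun p q => by beta_reduce; rw [add_mul]; exact integral_eval_add μ hμint _ _)
        (fun c p => by beta_reduce; rw [mul_assoc]; exact integral_eval_Cmul μ c _)
        P hPmonic hPdeg n
        (fun m hm => by
          have := hPorth m n (by omega)
          simpa [eval_mul] using this)
        (Q n - P n).natDegree (Q n - P n) le_rfl hsubdeg
      exact this
    have hsplit : Q n * P n = P n * P n + (Q n - P n) * P n := by ring
    rw [hsplit, integral_eval_add μ hμint, hzero, hnrm]
    simp [eval_mul, sq]
  -- Step F: innS orthogonality gives the value of ∫ Qn * P(n-1) dμ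
  have hF0 : innS (Q n) (P (n - 1)) = 0 := by
    have := F_lower (F := fun q => innS (Q n) q)
      (fun p q => by
        beta_reduce
        rw [hinnS, hinnS, hinnS]
        have : (fun x => (Q n).eval x * (p + q).eval x)
            = fun x => (Q n * p).eval x + (Q n * q).eval x := by
          funext x; simp [eval_mul]; ring
        rw [this]
        rw [show (∫ x, ((Q n * p).eval x + (Q n * q).eval x) ∂μ)
            = ∫ x, (Q n * p + Q n * q).eval x ∂μ by simp [eval_add],
          integral_eval_add μ hμint]
        simp [eval_mul]
        ring)
      (fun c p => by
        beta_reduce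
        rw [hinnS, hinnS]
        have : (fun x => (Q n).eval x * (Polynomial.C c * p).eval x)
            = fun x => (Polynomial.C c * (Q n * p)).eval x := by
          funext x; simp [eval_mul]; ring
        rw [this, integral_eval_Cmul μ c]
        simp [eval_mul]
        ring)
      Q hQmonic hQdeg n
      (fun m hm => hQorth n m (by omega))
      (n - 1) (P (n - 1)) (le_of_eq (hPdeg _)) (by rw [hPdeg]; omega)
    exact this
  have hF : (∫ x, (Q n * P (n - 1)).eval x ∂μ)
      = -(M * (Q n).eval a * (P (n - 1)).eval a
          + N * (derivative (Q n)).eval a * (derivative (P (n - 1))).eval a) := by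
    rw [hinnS] at hF0
    have : (∫ x, (Q n).eval x * (P (n - 1)).eval x ∂μ)
        = ∫ x, (Q n * P (n - 1)).eval x ∂μ := by simp [eval_mul]
    rw [this] at hF0
    linarith
  -- Step C: split the integral
  have hpoly : Q n * Pgg (n + 1) = Q n * P (n + 1)
      + Polynomial.C (B (n + 1)) * (Q n * P n)
      + Polynomial.C (C' (n + 1)) * (Q n * P (n - 1)) := by
    rw [hc]; ring
  rw [hA, hB, hpoly, integral_eval_add μ hμint, integral_eval_add μ hμint,
    integral_eval_Cmul, integral_eval_Cmul, hD, hE, hF]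
  ring
end

section
/- For every n ≥ 2, the Fourier coefficient numerator satisfies ⟨(x−a)² Q_n^{M,N}, P_n^{gg}⟩_gg = ‖P_n‖₀² − B_n (M Q_n^{M,N}(a) P_{n−1}(a) + N (Q_n^{M,N})′(a) P_{n−1}′(a)) − C_n (M Q_n^{M,N}(a) P_{n−2}(a) + N (Q_n^{M,N})′(a) P_{n−2}′(a)). -/
open MeasureTheory Polynomial Matrix

lemma lin_orth (φ : ℝ[X] → ℝ)
    (hadd : ∀ p q, φ (p + q) = φ p + φ q)
    (hsmul : ∀ (c : ℝ) p, φ (Polynomial.C c * p) = c * φ p)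
    (Bp : ℕ → ℝ[X]) (hm : ∀ k, (Bp k).Monic) (hd : ∀ k, (Bp k).natDegree = k)
    (n : ℕ) (horth : ∀ k, k < n → φ (Bp k) = 0) :
    ∀ p : ℝ[X], p.natDegree < n → φ p = 0 := by
  have h0 : φ 0 = 0 := by simpa using hsmul 0 0
  suffices H : ∀ d, ∀ p : ℝ[X], p.natDegree < n → p.natDegree ≤ d → φ p = 0 by
    intro p hp; exact H p.natDegree p hp le_rfl
  intro d
  induction d using Nat.strong_induction_on with
  | _ d ih =>
    intro p hpn hpd
    by_cases hp0 : p = 0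
    · simp [hp0, h0]
    · have hcne : p.leadingCoeff ≠ 0 := leadingCoeff_ne_zero.mpr hp0
      set q := p - Polynomial.C p.leadingCoeff * Bp p.natDegree with hq
      have hpb : p = Polynomial.C p.leadingCoeff * Bp p.natDegree + q := by ring
      have hdegeq : p.degree = (Polynomial.C p.leadingCoeff * Bp p.natDegree).degree := by
        rw [degree_C_mul hcne, degree_eq_natDegree hp0, degree_eq_natDegree (hm _).ne_zero,
          hd]
      have hlc : p.leadingCoeff = (Polynomial.C p.leadingCoeff * Bp p.natDegree).leadingCoeff := by
        rw [leadingCoeff_mul, leadingCoeff_C, (hm _).leadingCoeff, mul_one]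
      have hqlt : q.degree < p.degree := degree_sub_lt hdegeq hp0 hlc
      have hφq : φ q = 0 := by
        by_cases hq0 : q = 0
        · simp [hq0, h0]
        · have := natDegree_lt_natDegree hq0 hqlt
          exact ih q.natDegree (lt_of_lt_of_le this hpd) q (this.trans hpn) le_rfl
      rw [hpb, hadd, hsmul, horth _ hpn, hφq]
      ring

theorem fourier_coefficient_numerator_n
    (μ μgg : MeasureTheory.Measure ℝ) (E : Set ℝ) (a : ℝ)
    (hEc : IsCompact E) (hEinf : E.Infinite) (haE : a ∉ E) (hEsupp : μ Eᶜ = 0)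
    (hμint : ∀ p : ℝ[X], MeasureTheory.Integrable (fun x => p.eval x) μ)
    (hμpos : ∀ p : ℝ[X], p ≠ 0 → 0 < ∫ x, (p.eval x) ^ 2 ∂μ)
    (P : ℕ → ℝ[X])
    (hPmonic : ∀ n, (P n).Monic)
    (hPdeg : ∀ n, (P n).natDegree = n)
    (hPorth : ∀ m n, m ≠ n → ∫ x, (P m).eval x * (P n).eval x ∂μ = 0)
    (nrm : ℕ → ℝ) (hnrm : ∀ k, nrm k = ∫ x, ((P k).eval x) ^ 2 ∂μ)
    (hμggint : ∀ p : ℝ[X], MeasureTheory.Integrable (fun x => p.eval x) μgg)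
    (hμgg : ∀ p : ℝ[X], ∫ x, p.eval x * (x - a) ^ 2 ∂μgg = ∫ x, p.eval x ∂μ)
    (M₁ : Matrix (Fin 2) (Fin 2) ℝ) (hM₁ : M₁.IsSymm)
    (inn : ℝ[X] → ℝ[X] → ℝ)
    (hinn : ∀ p q : ℝ[X], inn p q = (∫ x, p.eval x * q.eval x ∂μgg)
      + ![p.eval a, (derivative p).eval a] ⬝ᵥ
          M₁.mulVec ![q.eval a, (derivative q).eval a])
    (hinnpos : ∀ p : ℝ[X], p ≠ 0 → 0 < inn p p)
    (Pgg : ℕ → ℝ[X])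
    (hGmonic : ∀ n, (Pgg n).Monic)
    (hGdeg : ∀ n, (Pgg n).natDegree = n)
    (hGorth : ∀ m n, m ≠ n → inn (Pgg m) (Pgg n) = 0)
    (B C' : ℕ → ℝ)
    (hconn1 : Pgg 1 = P 1 + Polynomial.C (B 1) * P 0)
    (hconn : ∀ n, 2 ≤ n →
      Pgg n = P n + Polynomial.C (B n) * P (n - 1) + Polynomial.C (C' n) * P (n - 2))
    (hC' : ∀ n, 2 ≤ n → C' n ≠ 0)
    (M N : ℝ) (hM : 0 < M) (hN : 0 < N)
    (innS : ℝ[X] → ℝ[X] → ℝ)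
    (hinnS : ∀ p q : ℝ[X], innS p q = (∫ x, p.eval x * q.eval x ∂μ)
      + M * p.eval a * q.eval a
      + N * (derivative p).eval a * (derivative q).eval a)
    (Q : ℕ → ℝ[X])
    (hQmonic : ∀ n, (Q n).Monic)
    (hQdeg : ∀ n, (Q n).natDegree = n)
    (hQorth : ∀ m n, m ≠ n → innS (Q m) (Q n) = 0)
    : ∀ n, 2 ≤ n →
      inn ((X - Polynomial.C a) ^ 2 * Q n) (Pgg n)
        = nrm n
          - B n * (M * (Q n).eval a * (P (n - 1)).eval a
              + N * (derivative (Q n)).eval a * (derivative (P (n - 1))).eval a)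
          - C' n * (M * (Q n).eval a * (P (n - 2)).eval a
              + N * (derivative (Q n)).eval a * (derivative (P (n - 2))).eval a) := by
  intro n hn
  have hintμ : ∀ p q : ℝ[X], Integrable (fun x => p.eval x * q.eval x) μ := by
    intro p q; simpa [eval_mul] using hμint (p * q)
  -- P n is μ-orthogonal to lower degree polynomials
  have hPlow : ∀ p : ℝ[X], p.natDegree < n → ∫ x, p.eval x * (P n).eval x ∂μ = 0 := by
    refine lin_orth _ ?_ ?_ P hPmonic hPdeg n ?_
    · intro p q
      have : (fun x => (p + q).eval x * (P n).eval x)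
          = fun x => p.eval x * (P n).eval x + q.eval x * (P n).eval x := by
        funext x; simp [eval_add]; ring
      rw [this, integral_add (hintμ _ _) (hintμ _ _)]
    · intro c p
      have : (fun x => (Polynomial.C c * p).eval x * (P n).eval x)
          = fun x => c * (p.eval x * (P n).eval x) := by
        funext x; simp [eval_mul]; ring
      rw [this, integral_const_mul]
    · intro k hk; exact hPorth k n hk.ne
  -- Q n is S-orthogonal to lower degree polynomials
  have hQlow : ∀ p : ℝ[X], p.natDegree < n → innS (Q n) p = 0 := by
    refine lin_orth _ ?_ ?_ Q hQmonic hQdeg n ?_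
    · intro p q
      have h : (fun x => (Q n).eval x * (p + q).eval x)
          = fun x => (Q n).eval x * p.eval x + (Q n).eval x * q.eval x := by
        funext x; simp [eval_add]; ring
      rw [hinnS, hinnS, hinnS, h, integral_add (hintμ _ _) (hintμ _ _)]
      simp only [eval_add, derivative_add]
      ring
    · intro c p
      have h : (fun x => (Q n).eval x * (Polynomial.C c * p).eval x)
          = fun x => c * ((Q n).eval x * p.eval x) := by
        funext x; simp [eval_mul]; ring
      rw [hinnS, hinnS, h, integral_const_mul]
      simp only [derivative_C_mul, eval_mul, eval_C]
      ring
    · intro k hk; exact hQorth n k hk.ne'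
  -- ∫ Q n · P n dμ = nrm n
  have key : ∫ x, (Q n).eval x * (P n).eval x ∂μ = nrm n := by
    have hz : ∫ x, ((Q n) - (P n)).eval x * (P n).eval x ∂μ = 0 := by
      by_cases hqp : Q n - P n = 0
      · simp [hqp]
      · apply hPlow
        have hdeg : (Q n).degree = (P n).degree := by
          rw [degree_eq_natDegree (hQmonic n).ne_zero,
            degree_eq_natDegree (hPmonic n).ne_zero, hQdeg, hPdeg]
        have hlt := degree_sub_lt hdeg (hQmonic n).ne_zero
          (by rw [(hQmonic n).leadingCoeff, (hPmonic n).leadingCoeff])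
        have h2 := natDegree_lt_natDegree hqp hlt
        rwa [hQdeg] at h2
    have hsplit : (fun x => (Q n).eval x * (P n).eval x)
        = fun x => (P n).eval x * (P n).eval x + ((Q n) - (P n)).eval x * (P n).eval x := by
      funext x; simp [eval_sub]; ring
    rw [hsplit, integral_add (hintμ _ _) (hintμ _ _), hz, hnrm, add_zero]
    congr 1; funext x; ring
  -- ∫ Q n · P k dμ for k < n
  have keyk : ∀ k, k < n → ∫ x, (Q n).eval x * (P k).eval x ∂μ
      = -(M * (Q n).eval a * (P k).eval a)
        - N * (derivative (Q n)).eval a * (derivative (P k)).eval a := by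
    intro k hk
    have h := hQlow (P k) (by rw [hPdeg]; exact hk)
    rw [hinnS] at h
    linarith
  -- evaluations of (X - a)^2 * Q n at a
  have hTa : ((X - Polynomial.C a) ^ 2 * Q n).eval a = 0 := by simp
  have hTa' : (derivative ((X - Polynomial.C a) ^ 2 * Q n)).eval a = 0 := by
    simp [derivative_mul, derivative_pow]
  rw [hinn, hTa, hTa']
  have hmat : (![(0:ℝ), 0] ⬝ᵥ M₁.mulVec ![(Pgg n).eval a, (derivative (Pgg n)).eval a]) = 0 := by
    simp [dotProduct, Fin.sum_univ_two]
  rw [hmat, add_zero]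
  have h1 : (fun x => ((X - Polynomial.C a) ^ 2 * Q n).eval x * (Pgg n).eval x)
      = fun x => ((Q n) * (Pgg n)).eval x * (x - a) ^ 2 := by
    funext x; simp [eval_mul]; ring
  rw [h1, hμgg]
  have h2 : (fun x => ((Q n) * (Pgg n)).eval x)
      = fun x => (Q n).eval x * (P n).eval x
        + (B n * ((Q n).eval x * (P (n-1)).eval x)
          + C' n * ((Q n).eval x * (P (n-2)).eval x)) := by
    funext x; rw [hconn n hn]; simp [eval_mul, eval_add]; ring
  have hI3 : Integrable (fun x => B n * ((Q n).eval x * (P (n-1)).eval x)) μ :=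
    (hintμ _ _).const_mul _
  have hI4 : Integrable (fun x => C' n * ((Q n).eval x * (P (n-2)).eval x)) μ :=
    (hintμ _ _).const_mul _
  have hI2 : Integrable (fun x => B n * ((Q n).eval x * (P (n-1)).eval x)
      + C' n * ((Q n).eval x * (P (n-2)).eval x)) μ := hI3.add hI4
  rw [h2, integral_add (hintμ _ _) hI2, integral_add hI3 hI4,
    integral_const_mul, integral_const_mul, key,
    keyk (n-1) (by omega), keyk (n-2) (by omega)]
  ring
end

section
/- For every n ≥ 2, the original monic orthogonal polynomials and the double Geronimus polynomials satisfy the connection formula (x−a)² P_n(x) = P_{n+2}^{gg}(x) + σ_{n+1,n+1} P_{n+1}^{gg}(x) + σ_{n+1,n} P_n^{gg}(x), where σ_{n+1,n+1} = B_{n+1} ‖P_n‖₀² / (C_{n+1} ‖P_{n−1}‖₀²) and σ_{n+1,n} = ‖P_n‖₀² / (C_n ‖P_{n−2}‖₀²). -/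
/-!
Let `D` be the difference of the two sides. Since `(X - a)² P n` and `Pgg (n + 2)` are both monic
of degree `n + 2`, `D` has degree `≤ n + 1` and so lies in the span of `Pgg 0, …, Pgg (n + 1)`.
The Geronimus relation `⟨p, (X - a)² q⟩_gg = ∫ p q dμ` turns `⟨Pgg k, D⟩_gg` into `μ`-integrals:
for `k < n` they vanish by orthogonality of `P n`, and for `k = n, n + 1` the coefficients `σ` are
exactly those that cancel them, because `⟨Pgg m, Pgg m⟩_gg = C m ‖P (m - 2)‖₀²`.
Hence `⟨D, D⟩_gg = 0`, and `D = 0` by positivity.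
-/

open MeasureTheory Polynomial Matrix

namespace Polynomial

variable {R M : Type*} [Ring R] [Nontrivial R] [AddCommGroup M] [Module R M]

theorem map_eq_zero_of_mem_degreeLT {Q : ℕ → R[X]} (hmonic : ∀ k, (Q k).Monic)
    (hdeg : ∀ k, (Q k).natDegree = k) (f : R[X] →ₗ[R] M) {m : ℕ} (hf : ∀ k < m, f (Q k) = 0)
    {p : R[X]} (hp : p ∈ degreeLT R m) : f p = 0 := by
  let S : Sequence R := ⟨Q, fun k => by rw [degree_eq_natDegree (hmonic k).ne_zero, hdeg]⟩
  rw [← S.span_degreeLT fun k _ => by simp [S, (hmonic k).leadingCoeff]] at hp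
  refine (Submodule.span_le (p := LinearMap.ker f)).2 ?_ hp
  rintro _ ⟨k, hk, rfl⟩
  exact hf k hk

theorem Monic.sub_mem_degreeLT {p q : R[X]} (hp : p.Monic) (hq : q.Monic) {n : ℕ}
    (hpn : p.natDegree = n) (hqn : q.natDegree = n) : p - q ∈ degreeLT R n := by
  rcases eq_or_ne p q with rfl | hne
  · rw [sub_self]
    exact Submodule.zero_mem _
  rw [mem_degreeLT, ← hpn, ← degree_eq_natDegree hp.ne_zero]
  refine degree_sub_lt_left ?_ hp.ne_zero (by rw [hp.leadingCoeff, hq.leadingCoeff])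
  rw [degree_eq_natDegree hp.ne_zero, degree_eq_natDegree hq.ne_zero, hpn, hqn]

end Polynomial

structure IsMonicOrthogonal {R : Type*} [CommRing R] (B : LinearMap.BilinForm R R[X])
    (Q : ℕ → R[X]) : Prop where
  monic (n : ℕ) : (Q n).Monic
  natDegree_eq (n : ℕ) : (Q n).natDegree = n
  apply_eq_zero {m n : ℕ} : m ≠ n → B (Q m) (Q n) = 0

namespace IsMonicOrthogonal

variable {R : Type*} [CommRing R] [Nontrivial R] {B : LinearMap.BilinForm R R[X]} {Q : ℕ → R[X]}
  (hQ : IsMonicOrthogonal B Q)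
include hQ

theorem mem_degreeLT_of_lt {m n : ℕ} (h : m < n) : Q m ∈ degreeLT R n := by
  rw [Polynomial.mem_degreeLT, degree_eq_natDegree (hQ.monic m).ne_zero, hQ.natDegree_eq]
  exact_mod_cast h

theorem apply_eq_zero_of_mem_degreeLT_right {n : ℕ} {p : R[X]} (hp : p ∈ degreeLT R n) :
    B (Q n) p = 0 :=
  map_eq_zero_of_mem_degreeLT hQ.monic hQ.natDegree_eq (B (Q n))
    (fun _ hk => hQ.apply_eq_zero hk.ne') hp

theorem apply_eq_zero_of_mem_degreeLT_left {n : ℕ} {p : R[X]} (hp : p ∈ degreeLT R n) :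
    B p (Q n) = 0 :=
  map_eq_zero_of_mem_degreeLT hQ.monic hQ.natDegree_eq (B.flip (Q n))
    (fun _ hk => hQ.apply_eq_zero hk.ne) hp

theorem apply_monic_right {n : ℕ} {p : R[X]} (hp : p.Monic) (hpn : p.natDegree = n) :
    B (Q n) p = B (Q n) (Q n) := by
  rw [← sub_eq_zero, ← map_sub]
  exact hQ.apply_eq_zero_of_mem_degreeLT_right
    (hp.sub_mem_degreeLT (hQ.monic n) hpn (hQ.natDegree_eq n))

theorem apply_monic_left {n : ℕ} {p : R[X]} (hp : p.Monic) (hpn : p.natDegree = n) :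
    B p (Q n) = B (Q n) (Q n) := by
  rw [← sub_eq_zero, ← LinearMap.sub_apply, ← map_sub]
  exact hQ.apply_eq_zero_of_mem_degreeLT_left
    (hp.sub_mem_degreeLT (hQ.monic n) hpn (hQ.natDegree_eq n))

theorem eq_zero_of_forall_apply_eq_zero (hB : ∀ p, B p p = 0 → p = 0) {m : ℕ} {p : R[X]}
    (hp : p ∈ degreeLT R m) (h : ∀ k < m, B (Q k) p = 0) : p = 0 :=
  hB p <| map_eq_zero_of_mem_degreeLT hQ.monic hQ.natDegree_eq (B.flip p) h hp

end IsMonicOrthogonal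

section Geronimus

variable {K : Type*} [Field K] {Bμ Bgg : LinearMap.BilinForm K K[X]} {w : K[X]}
  {P Pgg : ℕ → K[X]} {b c : ℕ → K}

theorem apply_connection_left
    (hconn : ∀ n, 2 ≤ n → Pgg n = P n + C (b n) * P (n - 1) + C (c n) * P (n - 2))
    {n : ℕ} (hn : 2 ≤ n) (q : K[X]) :
    Bμ (Pgg n) q = Bμ (P n) q + b n * Bμ (P (n - 1)) q + c n * Bμ (P (n - 2)) q := by
  simp only [hconn n hn, C_mul', map_add, map_smul, LinearMap.add_apply, LinearMap.smul_apply,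
    smul_eq_mul]

namespace IsMonicOrthogonal

variable (hP : IsMonicOrthogonal Bμ P) (hPgg : IsMonicOrthogonal Bgg Pgg)
  (hw : w.Monic) (hw2 : w.natDegree = 2) (hger : ∀ p q, Bgg p (w * q) = Bμ p q)
  (hconn : ∀ n, 2 ≤ n → Pgg n = P n + C (b n) * P (n - 1) + C (c n) * P (n - 2))
include hP hPgg hw hw2 hger hconn

theorem geronimus_apply_self {n : ℕ} (hn : 2 ≤ n) :
    Bgg (Pgg n) (Pgg n) = c n * Bμ (P (n - 2)) (P (n - 2)) := by
  have hdeg : (w * P (n - 2)).natDegree = n := by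
    rw [hw.natDegree_mul (hP.monic _), hw2, hP.natDegree_eq]; omega
  calc Bgg (Pgg n) (Pgg n) = Bgg (Pgg n) (w * P (n - 2)) :=
        (hPgg.apply_monic_right (hw.mul (hP.monic _)) hdeg).symm
    _ = Bμ (Pgg n) (P (n - 2)) := hger _ _
    _ = c n * Bμ (P (n - 2)) (P (n - 2)) := by
        rw [apply_connection_left hconn hn, hP.apply_eq_zero (by omega),
          hP.apply_eq_zero (by omega)]
        ring

theorem geronimus_connection (hanis : ∀ p, Bgg p p = 0 → p = 0)
    (hnorm : ∀ k, Bμ (P k) (P k) ≠ 0) (hc : ∀ n, 2 ≤ n → c n ≠ 0) {n : ℕ} (hn : 2 ≤ n) :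
    w * P n = Pgg (n + 2)
      + C (b (n + 1) * Bμ (P n) (P n) / (c (n + 1) * Bμ (P (n - 1)) (P (n - 1)))) * Pgg (n + 1)
      + C (Bμ (P n) (P n) / (c n * Bμ (P (n - 2)) (P (n - 2)))) * Pgg n := by
  rw [← sub_eq_zero, sub_add_eq_sub_sub, sub_add_eq_sub_sub]
  refine hPgg.eq_zero_of_forall_apply_eq_zero hanis (m := n + 2) ?_ fun k hk => ?_
  · have hlead : w * P n - Pgg (n + 2) ∈ degreeLT K (n + 2) :=
      (hw.mul (hP.monic n)).sub_mem_degreeLT (hPgg.monic _)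
        (by rw [hw.natDegree_mul (hP.monic n), hw2, hP.natDegree_eq, add_comm])
        (hPgg.natDegree_eq _)
    simp only [C_mul']
    exact sub_mem (sub_mem hlead (Submodule.smul_mem _ _ (hPgg.mem_degreeLT_of_lt (by omega))))
      (Submodule.smul_mem _ _ (hPgg.mem_degreeLT_of_lt (by omega)))
  simp only [map_sub, C_mul', map_smul, smul_eq_mul, hger,
    hPgg.apply_eq_zero (by omega : k ≠ n + 2)]
  obtain hkn | rfl | rfl : k < n ∨ k = n ∨ k = n + 1 := by omega
  · rw [hP.apply_eq_zero_of_mem_degreeLT_left (hPgg.mem_degreeLT_of_lt hkn),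
      hPgg.apply_eq_zero (by omega), hPgg.apply_eq_zero hkn.ne]
    ring
  · rw [hP.apply_monic_left (hPgg.monic k) (hPgg.natDegree_eq k), hPgg.apply_eq_zero (by omega),
      geronimus_apply_self hP hPgg hw hw2 hger hconn hn,
      div_mul_cancel₀ _ (mul_ne_zero (hc k hn) (hnorm (k - 2)))]
    ring
  · have hsub : n + 1 - 2 = n - 1 := by omega
    rw [apply_connection_left hconn (by omega), Nat.add_sub_cancel, hsub,
      hP.apply_eq_zero (show n + 1 ≠ n by omega), hP.apply_eq_zero (show n - 1 ≠ n by omega),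
      hPgg.apply_eq_zero (show n + 1 ≠ n by omega),
      geronimus_apply_self hP hPgg hw hw2 hger hconn (by omega), hsub,
      div_mul_cancel₀ _ (mul_ne_zero (hc (n + 1) (by omega)) (hnorm (n - 1)))]
    ring

end IsMonicOrthogonal

end Geronimus

noncomputable section

namespace Polynomial

variable (μ : Measure ℝ) (hμ : ∀ p : ℝ[X], Integrable (fun x => p.eval x) μ)

def integralEvalₗ : ℝ[X] →ₗ[ℝ] ℝ where
  toFun p := ∫ x, p.eval x ∂μ
  map_add' p q := by simp only [eval_add]; exact integral_add (hμ p) (hμ q)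
  map_smul' c p := by
    simp only [eval_smul, smul_eq_mul, RingHom.id_apply]; exact integral_const_mul c _

def l2Form : LinearMap.BilinForm ℝ ℝ[X] :=
  (LinearMap.mul ℝ ℝ[X]).compr₂ (integralEvalₗ μ hμ)

theorem l2Form_apply (p q : ℝ[X]) : l2Form μ hμ p q = ∫ x, p.eval x * q.eval x ∂μ := by
  simp [l2Form, integralEvalₗ]

variable {R : Type*} [CommRing R]

def jet₁ (a : R) : R[X] →ₗ[R] Fin 2 → R := LinearMap.pi ![leval a, leval a ∘ₗ derivative]

theorem jet₁_apply (a : R) (p : R[X]) : jet₁ a p = ![p.eval a, (derivative p).eval a] := by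
  ext i; fin_cases i <;> rfl

theorem jet₁_X_sub_C_sq_mul (a : R) (p : R[X]) : jet₁ a ((X - C a) ^ 2 * p) = 0 := by
  ext i; fin_cases i <;> simp [jet₁_apply, derivative_mul, derivative_pow]

end Polynomial

/-- The form `⟨·,·⟩_gg`, with `ν = μ_gg` and `M = M₁`. -/
def geronimusForm (ν : Measure ℝ) (hν : ∀ p : ℝ[X], Integrable (fun x => p.eval x) ν) (a : ℝ)
    (M : Matrix (Fin 2) (Fin 2) ℝ) : LinearMap.BilinForm ℝ ℝ[X] :=
  l2Form ν hν + (Matrix.toBilin' M).compl₁₂ (jet₁ a) (jet₁ a)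

end

theorem geronimusForm_apply (ν : Measure ℝ) (hν : ∀ p : ℝ[X], Integrable (fun x => p.eval x) ν)
    (a : ℝ) (M : Matrix (Fin 2) (Fin 2) ℝ) (p q : ℝ[X]) :
    geronimusForm ν hν a M p q = (∫ x, p.eval x * q.eval x ∂ν)
      + ![p.eval a, (derivative p).eval a] ⬝ᵥ M.mulVec ![q.eval a, (derivative q).eval a] := by
  simp [geronimusForm, l2Form_apply, Matrix.toBilin'_apply', jet₁_apply]

theorem geronimusForm_X_sub_C_sq_mul {μ ν : Measure ℝ}
    (hμ : ∀ p : ℝ[X], Integrable (fun x => p.eval x) μ)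
    (hν : ∀ p : ℝ[X], Integrable (fun x => p.eval x) ν) {a : ℝ}
    (hμν : ∀ p : ℝ[X], ∫ x, p.eval x * (x - a) ^ 2 ∂ν = ∫ x, p.eval x ∂μ)
    (M : Matrix (Fin 2) (Fin 2) ℝ) (p q : ℝ[X]) :
    geronimusForm ν hν a M p ((X - C a) ^ 2 * q) = l2Form μ hμ p q := by
  rw [geronimusForm, LinearMap.add_apply, LinearMap.add_apply, LinearMap.compl₁₂_apply,
    jet₁_X_sub_C_sq_mul, map_zero, add_zero, l2Form_apply, l2Form_apply]
  simp only [← eval_mul, ← hμν (p * q)]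
  congr 1 with x
  simp only [eval_mul, eval_pow, eval_sub, eval_X, eval_C]
  ring

theorem geronimus_standard_connection_general
    (μ μgg : MeasureTheory.Measure ℝ) (a : ℝ)
    (hμint : ∀ p : ℝ[X], MeasureTheory.Integrable (fun x => p.eval x) μ)
    (hμpos : ∀ p : ℝ[X], p ≠ 0 → 0 < ∫ x, (p.eval x) ^ 2 ∂μ)
    (P : ℕ → ℝ[X])
    (hPmonic : ∀ n, (P n).Monic)
    (hPdeg : ∀ n, (P n).natDegree = n)
    (hPorth : ∀ m n, m ≠ n → ∫ x, (P m).eval x * (P n).eval x ∂μ = 0)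
    (nrm : ℕ → ℝ) (hnrm : ∀ k, nrm k = ∫ x, ((P k).eval x) ^ 2 ∂μ)
    (hμggint : ∀ p : ℝ[X], MeasureTheory.Integrable (fun x => p.eval x) μgg)
    (hμgg : ∀ p : ℝ[X], ∫ x, p.eval x * (x - a) ^ 2 ∂μgg = ∫ x, p.eval x ∂μ)
    (M₁ : Matrix (Fin 2) (Fin 2) ℝ)
    (inn : ℝ[X] → ℝ[X] → ℝ)
    (hinn : ∀ p q : ℝ[X], inn p q = (∫ x, p.eval x * q.eval x ∂μgg)
      + ![p.eval a, (derivative p).eval a] ⬝ᵥ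
          M₁.mulVec ![q.eval a, (derivative q).eval a])
    (hinnpos : ∀ p : ℝ[X], p ≠ 0 → 0 < inn p p)
    (Pgg : ℕ → ℝ[X])
    (hGmonic : ∀ n, (Pgg n).Monic)
    (hGdeg : ∀ n, (Pgg n).natDegree = n)
    (hGorth : ∀ m n, m ≠ n → inn (Pgg m) (Pgg n) = 0)
    (B C' : ℕ → ℝ)
    (hconn : ∀ n, 2 ≤ n →
      Pgg n = P n + Polynomial.C (B n) * P (n - 1) + Polynomial.C (C' n) * P (n - 2))
    (hC' : ∀ n, 2 ≤ n → C' n ≠ 0)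
    : ∀ n, 2 ≤ n →
      (X - Polynomial.C a) ^ 2 * P n
        = Pgg (n + 2)
          + Polynomial.C (B (n + 1) * nrm n / (C' (n + 1) * nrm (n - 1))) * Pgg (n + 1)
          + Polynomial.C (nrm n / (C' n * nrm (n - 2))) * Pgg n := by
  have hinn' : ∀ p q, inn p q = geronimusForm μgg hμggint a M₁ p q := fun p q => by
    rw [hinn, geronimusForm_apply]
  have hnrm' : ∀ k, nrm k = l2Form μ hμint (P k) (P k) := fun k => by
    simp only [hnrm, l2Form_apply, sq]
  have hP : IsMonicOrthogonal (l2Form μ hμint) P :=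
    ⟨hPmonic, hPdeg, fun h => by rw [l2Form_apply]; exact hPorth _ _ h⟩
  have hPgg : IsMonicOrthogonal (geronimusForm μgg hμggint a M₁) Pgg :=
    ⟨hGmonic, hGdeg, fun h => by rw [← hinn']; exact hGorth _ _ h⟩
  have hanis : ∀ p, geronimusForm μgg hμggint a M₁ p p = 0 → p = 0 := fun p hp => by
    by_contra hne
    exact (hinnpos p hne).ne' (by rw [hinn', hp])
  have hnorm : ∀ k, l2Form μ hμint (P k) (P k) ≠ 0 := fun k => by
    rw [← hnrm', hnrm]
    exact (hμpos _ (hPmonic k).ne_zero).ne'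
  intro n hn
  simp only [hnrm']
  exact hP.geronimus_connection hPgg ((monic_X_sub_C a).pow 2) (by simp)
    (geronimusForm_X_sub_C_sq_mul hμint hμggint hμgg M₁) hconn hanis hnorm hC' hn

theorem geronimus_standard_connection
    (μ μgg : MeasureTheory.Measure ℝ) (E : Set ℝ) (a : ℝ)
    (hEc : IsCompact E) (hEinf : E.Infinite) (haE : a ∉ E) (hEsupp : μ Eᶜ = 0)
    (hμint : ∀ p : ℝ[X], MeasureTheory.Integrable (fun x => p.eval x) μ)
    (hμpos : ∀ p : ℝ[X], p ≠ 0 → 0 < ∫ x, (p.eval x) ^ 2 ∂μ)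
    (P : ℕ → ℝ[X])
    (hPmonic : ∀ n, (P n).Monic)
    (hPdeg : ∀ n, (P n).natDegree = n)
    (hPorth : ∀ m n, m ≠ n → ∫ x, (P m).eval x * (P n).eval x ∂μ = 0)
    (nrm : ℕ → ℝ) (hnrm : ∀ k, nrm k = ∫ x, ((P k).eval x) ^ 2 ∂μ)
    (hμggint : ∀ p : ℝ[X], MeasureTheory.Integrable (fun x => p.eval x) μgg)
    (hμgg : ∀ p : ℝ[X], ∫ x, p.eval x * (x - a) ^ 2 ∂μgg = ∫ x, p.eval x ∂μ)
    (M₁ : Matrix (Fin 2) (Fin 2) ℝ) (hM₁ : M₁.IsSymm)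
    (inn : ℝ[X] → ℝ[X] → ℝ)
    (hinn : ∀ p q : ℝ[X], inn p q = (∫ x, p.eval x * q.eval x ∂μgg)
      + ![p.eval a, (derivative p).eval a] ⬝ᵥ
          M₁.mulVec ![q.eval a, (derivative q).eval a])
    (hinnpos : ∀ p : ℝ[X], p ≠ 0 → 0 < inn p p)
    (Pgg : ℕ → ℝ[X])
    (hGmonic : ∀ n, (Pgg n).Monic)
    (hGdeg : ∀ n, (Pgg n).natDegree = n)
    (hGorth : ∀ m n, m ≠ n → inn (Pgg m) (Pgg n) = 0)
    (B C' : ℕ → ℝ)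
    (hconn1 : Pgg 1 = P 1 + Polynomial.C (B 1) * P 0)
    (hconn : ∀ n, 2 ≤ n →
      Pgg n = P n + Polynomial.C (B n) * P (n - 1) + Polynomial.C (C' n) * P (n - 2))
    (hC' : ∀ n, 2 ≤ n → C' n ≠ 0)
    : ∀ n, 2 ≤ n →
      (X - Polynomial.C a) ^ 2 * P n
        = Pgg (n + 2)
          + Polynomial.C (B (n + 1) * nrm n / (C' (n + 1) * nrm (n - 1))) * Pgg (n + 1)
          + Polynomial.C (nrm n / (C' n * nrm (n - 2))) * Pgg n :=
  geronimus_standard_connection_general μ μgg a hμint hμpos P hPmonic hPdeg hPorth nrm hnrm hμggint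
    hμgg M₁ inn hinn hinnpos Pgg hGmonic hGdeg hGorth B C' hconn hC'
end

section
/- The Sobolev norms of the Sobolev-type Jacobi orthogonal polynomials satisfy lim_{n→∞} ‖Q_n^{M,N}‖_S / ‖P̃_n^{(α,β)}‖_μ = 1, where ‖q‖_S² = ⟨q,q⟩_S and ‖P̃_n^{(α,β)}‖_μ² = ∫_{−1}^{1} (P̃_n^{(α,β)}(x))² (1−x)^α (1+x)^β dx. -/
open MeasureTheory Polynomial Filter

set_option maxHeartbeats 1600000

open MeasureTheory Polynomial Filter Set intervalIntegral Topology
open scoped ENNReal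

namespace SJ


lemma oneSubInt {r : ℝ} (hr : -1 < r) :
    IntervalIntegrable (fun x : ℝ => (1 - x) ^ r) volume (-1) 1 := by
  have := (intervalIntegrable_rpow' (a := 2) (b := 0) (r := r) hr).comp_sub_left 1
  norm_num at this
  exact this

lemma onePlusInt {r : ℝ} (hr : -1 < r) :
    IntervalIntegrable (fun x : ℝ => (1 + x) ^ r) volume (-1) 1 := by
  have := (intervalIntegrable_rpow' (a := 0) (b := 2) (r := r) hr).comp_add_right 1
  norm_num at this
  have h : (fun x : ℝ => (x + 1) ^ r) = fun x : ℝ => (1 + x) ^ r := by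
    funext x; rw [add_comm]
  rwa [h] at this

lemma contOn_oneSub {r : ℝ} {s : Set ℝ} (hs : ∀ x ∈ s, x < 1) :
    ContinuousOn (fun x : ℝ => (1 - x) ^ r) s :=
  ContinuousOn.rpow_const (by fun_prop) (fun x hx => Or.inl (by have := hs x hx; nlinarith))

lemma contOn_onePlus {r : ℝ} {s : Set ℝ} (hs : ∀ x ∈ s, -1 < x) :
    ContinuousOn (fun x : ℝ => (1 + x) ^ r) s :=
  ContinuousOn.rpow_const (by fun_prop) (fun x hx => Or.inl (by have := hs x hx; nlinarith))

/-- Interval integrability of `g * weight` for continuous `g`. -/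
lemma wInt {a b : ℝ} (ha : -1 < a) (hb : -1 < b) {g : ℝ → ℝ}
    (hg : ContinuousOn g (Icc (-1:ℝ) 1)) :
    IntervalIntegrable (fun x => g x * ((1 - x) ^ a * (1 + x) ^ b)) volume (-1) 1 := by
  have hL : IntervalIntegrable (fun x => g x * ((1 - x) ^ a * (1 + x) ^ b)) volume (-1) 0 := by
    have hmono : uIcc (-1:ℝ) 0 ⊆ uIcc (-1:ℝ) 1 := by
      rw [uIcc_of_le (by norm_num : (-1:ℝ) ≤ 0), uIcc_of_le (by norm_num : (-1:ℝ) ≤ 1)]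
      exact Icc_subset_Icc le_rfl (by norm_num)
    have hcont : ContinuousOn (fun x => g x * (1 - x) ^ a) (uIcc (-1:ℝ) 0) := by
      rw [uIcc_of_le (by norm_num : (-1:ℝ) ≤ 0)]
      exact (hg.mono (Icc_subset_Icc le_rfl (by norm_num))).mul
        (contOn_oneSub (fun x hx => by simp at hx; linarith [hx.2]))
    have := ((onePlusInt hb).mono_set hmono).mul_continuousOn hcont
    have h : (fun x => (1 + x) ^ b * (g x * (1 - x) ^ a))
        = fun x => g x * ((1 - x) ^ a * (1 + x) ^ b) := by funext x; ring
    rwa [h] at this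
  have hR : IntervalIntegrable (fun x => g x * ((1 - x) ^ a * (1 + x) ^ b)) volume 0 1 := by
    have hmono : uIcc (0:ℝ) 1 ⊆ uIcc (-1:ℝ) 1 := by
      rw [uIcc_of_le (by norm_num : (0:ℝ) ≤ 1), uIcc_of_le (by norm_num : (-1:ℝ) ≤ 1)]
      exact Icc_subset_Icc (by norm_num) le_rfl
    have hcont : ContinuousOn (fun x => g x * (1 + x) ^ b) (uIcc (0:ℝ) 1) := by
      rw [uIcc_of_le (by norm_num : (0:ℝ) ≤ 1)]
      exact (hg.mono (Icc_subset_Icc (by norm_num) le_rfl)).mul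
        (contOn_onePlus (fun x hx => by simp at hx; linarith [hx.1]))
    have := ((oneSubInt ha).mono_set hmono).mul_continuousOn hcont
    have h : (fun x => (1 - x) ^ a * (g x * (1 + x) ^ b))
        = fun x => g x * ((1 - x) ^ a * (1 + x) ^ b) := by funext x; ring
    rwa [h] at this
  exact hL.trans hR

lemma wInt' {a b : ℝ} (ha : -1 < a) (hb : -1 < b) {g : ℝ → ℝ}
    (hg : ContinuousOn g (Icc (-1:ℝ) 1)) :
    IntegrableOn (fun x => g x * ((1 - x) ^ a * (1 + x) ^ b)) (Ioo (-1:ℝ) 1) := by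
  have h := wInt ha hb hg
  rw [intervalIntegrable_iff_integrableOn_Ioo_of_le (by norm_num : (-1:ℝ) ≤ 1)] at h
  exact h



noncomputable def II (a b : ℝ) (p q : ℝ[X]) : ℝ :=
  ∫ x in Ioo (-1:ℝ) 1, p.eval x * q.eval x * (1 - x) ^ a * (1 + x) ^ b

lemma IInt {a b : ℝ} (ha : -1 < a) (hb : -1 < b) (p q : ℝ[X]) :
    IntegrableOn (fun x => p.eval x * q.eval x * (1 - x) ^ a * (1 + x) ^ b) (Ioo (-1:ℝ) 1) := by
  have h := wInt' ha hb (g := fun x => p.eval x * q.eval x)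
    ((p.continuous_aeval.continuousOn).mul (q.continuous_aeval.continuousOn))
  have he : (fun x => (p.eval x * q.eval x) * ((1 - x) ^ a * (1 + x) ^ b))
      = fun x => p.eval x * q.eval x * (1 - x) ^ a * (1 + x) ^ b := by funext x; ring
  rwa [he] at h

lemma II_symm (a b : ℝ) (p q : ℝ[X]) : II a b p q = II a b q p := by
  unfold II
  congr 1; funext x; ring

lemma II_add_right {a b : ℝ} (ha : -1 < a) (hb : -1 < b) (p q r : ℝ[X]) :
    II a b p (q + r) = II a b p q + II a b p r := by
  unfold II
  rw [← integral_add (IInt ha hb p q) (IInt ha hb p r)]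
  congr 1; funext x; simp [eval_add]; ring

lemma II_smul_right (a b : ℝ) (c : ℝ) (p q : ℝ[X]) :
    II a b p (c • q) = c * II a b p q := by
  unfold II
  rw [show c * (∫ x in Ioo (-1:ℝ) 1, eval x p * eval x q * (1 - x) ^ a * (1 + x) ^ b)
      = ∫ x in Ioo (-1:ℝ) 1, c • (eval x p * eval x q * (1 - x) ^ a * (1 + x) ^ b) from
    (MeasureTheory.integral_smul c _).symm]
  congr 1; funext x; simp [smul_eq_mul]; ring

lemma II_sub_right {a b : ℝ} (ha : -1 < a) (hb : -1 < b) (p q r : ℝ[X]) :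
    II a b p (q - r) = II a b p q - II a b p r := by
  have : q - r + r = q := by ring
  have h := II_add_right ha hb p (q - r) r
  rw [this] at h; linarith

lemma II_zero_right (a b : ℝ) (p : ℝ[X]) : II a b p 0 = 0 := by
  unfold II; simp

/-- expansion into monomials -/
lemma II_eq_sum_monomials {a b : ℝ} (ha : -1 < a) (hb : -1 < b) (p q : ℝ[X]) :
    II a b p q = ∑ k ∈ Finset.range (q.natDegree + 1), q.coeff k * II a b p (X ^ k) := by
  conv_lhs => rw [q.as_sum_range' (q.natDegree + 1) (lt_add_one _)]
  induction (q.natDegree + 1) with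
  | zero => simp [II_zero_right]
  | succ n ih =>
      rw [Finset.sum_range_succ, Finset.sum_range_succ, II_add_right ha hb, ih, ← Polynomial.smul_X_eq_monomial, II_smul_right]

lemma IIpos {a b : ℝ} (ha : -1 < a) (hb : -1 < b) {p : ℝ[X]} (hp : p ≠ 0) :
    0 < II a b p p := by
  set f : ℝ → ℝ := fun x => p.eval x * p.eval x * (1 - x) ^ a * (1 + x) ^ b with hf
  have hnn : 0 ≤ᵐ[volume.restrict (Ioo (-1:ℝ) 1)] f := by
    refine (ae_restrict_iff' measurableSet_Ioo).2 (Eventually.of_forall fun x hx => ?_)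
    have h1 : (0:ℝ) ≤ 1 - x := by linarith [hx.2]
    have h2 : (0:ℝ) ≤ 1 + x := by linarith [hx.1]
    exact mul_nonneg (mul_nonneg (mul_self_nonneg _) (Real.rpow_nonneg h1 _)) (Real.rpow_nonneg h2 _)
  have hint := IInt ha hb p p
  rw [show II a b p p = ∫ x in Ioo (-1:ℝ) 1, f x from rfl]
  rw [setIntegral_pos_iff_support_of_nonneg_ae hnn hint]
  have hsub : Ioo (-1:ℝ) 1 \ {x | IsRoot p x} ⊆ Function.support f ∩ Ioo (-1:ℝ) 1 := by
    intro x hx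
    obtain ⟨hx1, hx2⟩ := hx
    refine ⟨?_, hx1⟩
    have h1 : (0:ℝ) < 1 - x := by linarith [hx1.2]
    have h2 : (0:ℝ) < 1 + x := by linarith [hx1.1]
    have hpe : p.eval x ≠ 0 := hx2
    simp only [Function.mem_support, hf]
    exact mul_ne_zero (mul_ne_zero (mul_ne_zero hpe hpe)
      (ne_of_gt (Real.rpow_pos_of_pos h1 a))) (ne_of_gt (Real.rpow_pos_of_pos h2 b))
  have hroots : volume {x : ℝ | IsRoot p x} = 0 :=
    (Polynomial.finite_setOf_isRoot hp).measure_zero _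
  calc (0:ℝ≥0∞) < volume (Ioo (-1:ℝ) 1) := by rw [Real.volume_Ioo]; norm_num
    _ = volume (Ioo (-1:ℝ) 1 \ {x | IsRoot p x}) := (measure_diff_null hroots).symm
    _ ≤ volume (Function.support f ∩ Ioo (-1:ℝ) 1) := measure_mono hsub

lemma IInonneg {a b : ℝ} (ha : -1 < a) (hb : -1 < b) (p : ℝ[X]) :
    0 ≤ II a b p p := by
  rcases eq_or_ne p 0 with h | h
  · simp [h, II_zero_right]
  · exact (IIpos ha hb h).le




lemma natDegree_lt_of_coeff_eq_zero {p : ℝ[X]} {n : ℕ} (h0 : p ≠ 0)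
    (hle : p.natDegree ≤ n) (hc : p.coeff n = 0) : p.natDegree < n := by
  rcases lt_or_eq_of_le hle with h | h
  · exact h
  · exfalso; apply h0
    refine Polynomial.leadingCoeff_eq_zero.mp ?_
    rw [Polynomial.leadingCoeff, h]; exact hc

noncomputable def gs (a b : ℝ) : ℕ → ℝ[X]
  | n => X ^ n - ∑ k : Fin n,
      (II a b (X ^ n) (gs a b k.1) / II a b (gs a b k.1) (gs a b k.1)) • gs a b k.1
  decreasing_by exact k.isLt

lemma gs_def (a b : ℝ) (n : ℕ) : gs a b n = X ^ n - ∑ k : Fin n,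
    (II a b (X ^ n) (gs a b k.1) / II a b (gs a b k.1) (gs a b k.1)) • gs a b k.1 := by
  rw [gs]

lemma II_sum_right {a b : ℝ} (ha : -1 < a) (hb : -1 < b) {ι : Type*} (s : Finset ι)
    (p : ℝ[X]) (f : ι → ℝ[X]) : II a b p (∑ i ∈ s, f i) = ∑ i ∈ s, II a b p (f i) := by
  classical
  induction s using Finset.induction_on with
  | empty => simp [II_zero_right]
  | insert _ _ hni ih => rw [Finset.sum_insert hni, Finset.sum_insert hni, II_add_right ha hb, ih]

lemma gs_spec (a b : ℝ) (ha : -1 < a) (hb : -1 < b) (n : ℕ) :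
    Monic (gs a b n) ∧ (gs a b n).natDegree = n ∧
      ∀ k, k < n → II a b (gs a b n) (gs a b k) = 0 := by
  induction n using Nat.strong_induction_on with
  | _ n IH =>
    have hS : (∑ k : Fin n,
        (II a b (X ^ n) (gs a b k.1) / II a b (gs a b k.1) (gs a b k.1)) • gs a b k.1).natDegree < n
        ∨ n = 0 := by
      rcases Nat.eq_zero_or_pos n with h | h
      · exact Or.inr h
      · left
        refine lt_of_le_of_lt (Polynomial.natDegree_sum_le_of_forall_le _ _ fun k _ => ?_)
          (Nat.sub_lt h one_pos)
        refine le_trans (natDegree_smul_le _ _) ?_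
        rw [(IH k.1 k.isLt).2.1]
        omega
    rcases hS with hS | hn0
    · -- n ≥ 1 case
      have hdeg : (gs a b n).natDegree = n := by
        rw [gs_def]
        rw [natDegree_sub_eq_left_of_natDegree_lt (by rwa [natDegree_X_pow]), natDegree_X_pow]
      have hmonic : Monic (gs a b n) := by
        have : (gs a b n).coeff n = 1 := by
          rw [gs_def, coeff_sub, coeff_X_pow, if_pos rfl,
            Polynomial.coeff_eq_zero_of_natDegree_lt hS]
          ring
        rwa [Monic, leadingCoeff, hdeg]
      refine ⟨hmonic, hdeg, fun j hj => ?_⟩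
      have hgj : gs a b j ≠ 0 := (IH j hj).1.ne_zero
      have hjj : II a b (gs a b j) (gs a b j) ≠ 0 := (IIpos ha hb hgj).ne'
      rw [gs_def, II_symm, II_sub_right ha hb, II_sum_right ha hb]
      rw [Finset.sum_eq_single (⟨j, hj⟩ : Fin n)]
      · rw [II_smul_right, div_mul_cancel₀ _ (by rw [II_symm] at hjj ⊢; exact hjj)]
        rw [II_symm]; ring
      · intro k _ hk
        have hkj : k.1 ≠ j := fun h => hk (by ext; exact h)
        rw [II_smul_right]
        rcases lt_or_gt_of_ne hkj with h | h
        · rw [(IH j hj).2.2 k.1 h]; ring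
        · rw [II_symm a b (gs a b j) (gs a b k.1), (IH k.1 k.isLt).2.2 j h]; ring
      · intro h; exact absurd (Finset.mem_univ _) h
    · -- n = 0
      subst hn0
      constructor
      · rw [gs_def]; simp [monic_one]
      · rw [gs_def]; simp
  
lemma gs_monic (a b : ℝ) (ha : -1 < a) (hb : -1 < b) (n : ℕ) : Monic (gs a b n) :=
  (gs_spec a b ha hb n).1
lemma gs_natDegree (a b : ℝ) (ha : -1 < a) (hb : -1 < b) (n : ℕ) : (gs a b n).natDegree = n :=
  (gs_spec a b ha hb n).2.1
lemma gs_ne_zero (a b : ℝ) (ha : -1 < a) (hb : -1 < b) (n : ℕ) : gs a b n ≠ 0 :=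
  (gs_monic a b ha hb n).ne_zero

/-- orthogonality of `gs n` against monomials of lower degree -/
lemma gs_orth_monomial (a b : ℝ) (ha : -1 < a) (hb : -1 < b) (n : ℕ) :
    ∀ k, k < n → II a b (gs a b n) (X ^ k) = 0 := by
  intro k
  induction k using Nat.strong_induction_on with
  | _ k IHk =>
    intro hk
    have hXk : (X:ℝ[X]) ^ k = gs a b k + (X ^ k - gs a b k) := by ring
    rw [hXk, II_add_right ha hb, (gs_spec a b ha hb n).2.2 k hk]
    rcases eq_or_ne ((X:ℝ[X]) ^ k - gs a b k) 0 with h | h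
    · rw [h, II_zero_right]; ring
    · have hdlt : ((X:ℝ[X]) ^ k - gs a b k).natDegree < k := by
        refine natDegree_lt_of_coeff_eq_zero h ?_ ?_
        · refine le_trans (natDegree_sub_le _ _) ?_
          rw [natDegree_X_pow, gs_natDegree a b ha hb]; omega
        · rw [coeff_sub, coeff_X_pow, if_pos rfl]
          have := (gs_monic a b ha hb k)
          rw [Monic, leadingCoeff, gs_natDegree a b ha hb] at this
          rw [this]; ring
      rw [II_eq_sum_monomials ha hb]
      have : ∀ m ∈ Finset.range (((X:ℝ[X]) ^ k - gs a b k).natDegree + 1),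
          ((X:ℝ[X]) ^ k - gs a b k).coeff m * II a b (gs a b n) (X ^ m) = 0 := by
        intro m hm
        rw [Finset.mem_range] at hm
        have hmk : m < k := by omega
        rw [IHk m hmk (hmk.trans hk)]; ring
      rw [Finset.sum_eq_zero this]; ring

/-- orthogonality of `gs n` against all polynomials of lower degree -/
lemma gs_orth (a b : ℝ) (ha : -1 < a) (hb : -1 < b) (n : ℕ) (q : ℝ[X])
    (hq : q.natDegree < n) : II a b (gs a b n) q = 0 := by
  rw [II_eq_sum_monomials ha hb]
  refine Finset.sum_eq_zero fun m hm => ?_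
  rw [Finset.mem_range] at hm
  rw [gs_orth_monomial a b ha hb n m (by omega)]; ring

/-- uniqueness -/
lemma gs_unique (a b : ℝ) (ha : -1 < a) (hb : -1 < b) (n : ℕ) (p : ℝ[X])
    (hm : Monic p) (hd : p.natDegree = n)
    (ho : ∀ q : ℝ[X], q.natDegree < n → II a b p q = 0) : p = gs a b n := by
  by_contra hne
  have hd0 : p - gs a b n ≠ 0 := sub_ne_zero.2 hne
  have hdlt : (p - gs a b n).natDegree < n := by
    refine natDegree_lt_of_coeff_eq_zero hd0 ?_ ?_
    · refine le_trans (natDegree_sub_le _ _) ?_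
      rw [hd, gs_natDegree a b ha hb]; omega
    · rw [coeff_sub]
      have h1 : p.coeff n = 1 := by rw [← hd]; exact hm
      have h2 : (gs a b n).coeff n = 1 := by
        have := gs_monic a b ha hb n
        rwa [Monic, leadingCoeff, gs_natDegree a b ha hb] at this
      rw [h1, h2]; ring
  have : II a b (p - gs a b n) (p - gs a b n) = 0 := by
    rw [II_sub_right ha hb, II_symm a b (p - gs a b n) p,
      II_symm a b (p - gs a b n) (gs a b n), ho _ hdlt, gs_orth a b ha hb n _ hdlt]; ring
  exact absurd this (IIpos ha hb hd0).ne'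

noncomputable def hh (a b : ℝ) (n : ℕ) : ℝ := II a b (gs a b n) (gs a b n)

lemma hh_pos (a b : ℝ) (ha : -1 < a) (hb : -1 < b) (n : ℕ) : 0 < hh a b n :=
  IIpos ha hb (gs_ne_zero a b ha hb n)




lemma hasDerivAt_oneSub (r : ℝ) {x : ℝ} (hx : x < 1) :
    HasDerivAt (fun y : ℝ => (1 - y) ^ r) (-(r * (1 - x) ^ (r - 1))) x := by
  have h1 : (1:ℝ) - x ≠ 0 := ne_of_gt (by linarith)
  have h := (Real.hasDerivAt_rpow_const (x := 1 - x) (p := r) (Or.inl h1)).comp x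
    ((hasDerivAt_id x).const_sub 1)
  exact h.congr_deriv (by ring)

lemma hasDerivAt_onePlus (r : ℝ) {x : ℝ} (hx : -1 < x) :
    HasDerivAt (fun y : ℝ => (1 + y) ^ r) (r * (1 + x) ^ (r - 1)) x := by
  have h1 : (1:ℝ) + x ≠ 0 := ne_of_gt (by linarith)
  have h := (Real.hasDerivAt_rpow_const (x := 1 + x) (p := r) (Or.inl h1)).comp x
    ((hasDerivAt_id x).const_add 1)
  exact h.congr_deriv (by ring)

lemma contAt_oneSub_rpow {r : ℝ} (hr : 0 < r) :
    ContinuousAt (fun y : ℝ => (1 - y) ^ r) 1 := by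
  have h0 : ContinuousAt (fun z : ℝ => z ^ r) ((fun y : ℝ => 1 - y) 1) := by
    simp only [sub_self]
    exact Real.continuousAt_rpow_const 0 r (Or.inr hr.le)
  have := h0.comp ((continuous_const.sub continuous_id).continuousAt (x := 1))
  exact this

lemma contAt_onePlus_rpow {r : ℝ} (hr : 0 < r) :
    ContinuousAt (fun y : ℝ => (1 + y) ^ r) (-1) := by
  have h0 : ContinuousAt (fun z : ℝ => z ^ r) ((fun y : ℝ => 1 + y) (-1)) := by
    simp only [add_neg_cancel]
    exact Real.continuousAt_rpow_const 0 r (Or.inr hr.le)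
  have := h0.comp ((continuous_const.add continuous_id).continuousAt (x := -1))
  exact this

lemma contAt_oneSub_rpow' (r : ℝ) {x : ℝ} (hx : x < 1) :
    ContinuousAt (fun y : ℝ => (1 - y) ^ r) x := by
  have h1 : (1:ℝ) - x ≠ 0 := ne_of_gt (by linarith)
  have h0 : ContinuousAt (fun z : ℝ => z ^ r) ((fun y : ℝ => 1 - y) x) :=
    Real.continuousAt_rpow_const _ r (Or.inl h1)
  have := h0.comp ((continuous_const.sub continuous_id).continuousAt (x := x))
  exact this

lemma contAt_onePlus_rpow' (r : ℝ) {x : ℝ} (hx : -1 < x) :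
    ContinuousAt (fun y : ℝ => (1 + y) ^ r) x := by
  have h1 : (1:ℝ) + x ≠ 0 := ne_of_gt (by linarith)
  have h0 : ContinuousAt (fun z : ℝ => z ^ r) ((fun y : ℝ => 1 + y) x) :=
    Real.continuousAt_rpow_const _ r (Or.inl h1)
  have := h0.comp ((continuous_const.add continuous_id).continuousAt (x := x))
  exact this

/-- Core integration by parts identity. -/
lemma IBP_core {a b : ℝ} (ha : -1 < a) (hb : -1 < b) (h : ℝ[X]) :
    ∫ x in Ioo (-1:ℝ) 1,
      ((derivative h).eval x * ((1 - x) * (1 + x))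
        + h.eval x * ((b+1)*(1-x) - (a+1)*(1+x))) * ((1 - x) ^ a * (1 + x) ^ b) = 0 := by
  set F' : ℝ → ℝ := fun x =>
    ((derivative h).eval x * ((1 - x) * (1 + x))
      + h.eval x * ((b+1)*(1-x) - (a+1)*(1+x))) * ((1 - x) ^ a * (1 + x) ^ b) with hF'
  set G : ℝ → ℝ := fun x => h.eval x * ((1 - x) ^ (a+1) * (1 + x) ^ (b+1)) with hG
  have hderiv : ∀ x ∈ Ioo (-1:ℝ) 1, HasDerivAt G (F' x) x := by
    intro x hx
    have h1 : (1:ℝ) - x ≠ 0 := ne_of_gt (by linarith [hx.2])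
    have h2 : (1:ℝ) + x ≠ 0 := ne_of_gt (by linarith [hx.1])
    have d1 := hasDerivAt_oneSub (a+1) hx.2
    have d2 := hasDerivAt_onePlus (b+1) hx.1
    rw [add_sub_cancel_right] at d1 d2
    have dh : HasDerivAt (fun y : ℝ => h.eval y) ((derivative h).eval x) x :=
      h.hasDerivAt x
    have hmul := dh.mul (d1.mul d2)
    have heq : (derivative h).eval x * ((1 - x) ^ (a+1) * (1 + x) ^ (b+1))
        + h.eval x * (-((a+1) * (1 - x) ^ a) * (1 + x) ^ (b+1)
          + (1 - x) ^ (a+1) * ((b+1) * (1 + x) ^ b)) = F' x := by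
      rw [hF']
      rw [Real.rpow_add_one h1 a, Real.rpow_add_one h2 b]
      ring
    exact heq ▸ hmul
  have hint : IntervalIntegrable F' volume (-1) 1 := by
    refine wInt ha hb ?_
    fun_prop
  have hL : Tendsto G (𝓝[>] (-1:ℝ)) (𝓝 0) := by
    have hc : ContinuousAt G (-1) := by
      refine (h.continuous_aeval.continuousAt).mul (ContinuousAt.mul ?_ ?_)
      · exact contAt_oneSub_rpow' (a+1) (by norm_num)
      · exact contAt_onePlus_rpow (by linarith)
    have := hc.continuousWithinAt (s := Ioi (-1:ℝ))
    have hG0 : G (-1) = 0 := by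
      rw [hG]; simp [Real.zero_rpow (by linarith : b + 1 ≠ 0)]
    rw [ContinuousWithinAt, hG0] at this
    exact this
  have hR : Tendsto G (𝓝[<] (1:ℝ)) (𝓝 0) := by
    have hc : ContinuousAt G 1 := by
      refine (h.continuous_aeval.continuousAt).mul (ContinuousAt.mul ?_ ?_)
      · exact contAt_oneSub_rpow (by linarith)
      · exact contAt_onePlus_rpow' (b+1) (by norm_num)
    have := hc.continuousWithinAt (s := Iio (1:ℝ))
    have hG0 : G 1 = 0 := by
      rw [hG]; simp [Real.zero_rpow (by linarith : a + 1 ≠ 0)]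
    rw [ContinuousWithinAt, hG0] at this
    exact this
  have key := integral_eq_sub_of_hasDerivAt_of_tendsto (f := G) (f' := F')
    (by norm_num : (-1:ℝ) < 1) hderiv hint hL hR
  rw [intervalIntegral.integral_of_le (by norm_num : (-1:ℝ) ≤ 1),
    integral_Ioc_eq_integral_Ioo] at key
  simpa using key

/-- the weight integral -/
noncomputable def Ic (a b : ℝ) : ℝ := ∫ x in Ioo (-1:ℝ) 1, (1 - x) ^ a * (1 + x) ^ b

/-- recurrence for the weight integral -/
lemma Ic_rec {a b : ℝ} (ha : 0 < a) (hb : -1 < b) :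
    (b + 1) * Ic a b = a * Ic (a-1) (b+1) := by
  set F' : ℝ → ℝ := fun x =>
    (-a) * ((1 - x) ^ (a-1) * (1 + x) ^ (b+1)) + (b+1) * ((1 - x) ^ a * (1 + x) ^ b) with hF'
  set G : ℝ → ℝ := fun x => (1 - x) ^ a * (1 + x) ^ (b+1) with hG
  have hderiv : ∀ x ∈ Ioo (-1:ℝ) 1, HasDerivAt G (F' x) x := by
    intro x hx
    have h1 : (1:ℝ) - x ≠ 0 := ne_of_gt (by linarith [hx.2])
    have h2 : (1:ℝ) + x ≠ 0 := ne_of_gt (by linarith [hx.1])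
    have d1 := hasDerivAt_oneSub a hx.2
    have d2 := hasDerivAt_onePlus (b+1) hx.1
    rw [add_sub_cancel_right] at d2
    have hmul := d1.mul d2
    have heq : -(a * (1 - x) ^ (a-1)) * (1 + x) ^ (b+1)
        + (1 - x) ^ a * ((b+1) * (1 + x) ^ b) = F' x := by
      rw [hF']; ring
    exact heq ▸ hmul
  have hint1 : IntervalIntegrable
      (fun x => (-a) * ((1 - x) ^ (a-1) * (1 + x) ^ (b+1))) volume (-1) 1 := by
    have h := wInt (a := a - 1) (b := b + 1) (by linarith) (by linarith)
      (g := fun _ => -a) continuousOn_const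
    exact h
  have hint2 : IntervalIntegrable
      (fun x => (b+1) * ((1 - x) ^ a * (1 + x) ^ b)) volume (-1) 1 :=
    wInt (by linarith) hb (g := fun _ => b + 1) continuousOn_const
  have hint : IntervalIntegrable F' volume (-1) 1 := hint1.add hint2
  have hL : Tendsto G (𝓝[>] (-1:ℝ)) (𝓝 0) := by
    have hc : ContinuousAt G (-1) := by
      refine ContinuousAt.mul ?_ ?_
      · exact contAt_oneSub_rpow' a (by norm_num)
      · exact contAt_onePlus_rpow (by linarith)
    have := hc.continuousWithinAt (s := Ioi (-1:ℝ))
    have hG0 : G (-1) = 0 := by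
      rw [hG]; simp [Real.zero_rpow (by linarith : b + 1 ≠ 0)]
    rw [ContinuousWithinAt, hG0] at this
    exact this
  have hR : Tendsto G (𝓝[<] (1:ℝ)) (𝓝 0) := by
    have hc : ContinuousAt G 1 := by
      refine ContinuousAt.mul ?_ ?_
      · exact contAt_oneSub_rpow ha
      · exact contAt_onePlus_rpow' (b+1) (by norm_num)
    have := hc.continuousWithinAt (s := Iio (1:ℝ))
    have hG0 : G 1 = 0 := by
      rw [hG]; simp [Real.zero_rpow (by linarith : a ≠ 0)]
    rw [ContinuousWithinAt, hG0] at this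
    exact this
  have key := integral_eq_sub_of_hasDerivAt_of_tendsto (f := G) (f' := F')
    (by norm_num : (-1:ℝ) < 1) hderiv hint hL hR
  rw [intervalIntegral.integral_of_le (by norm_num : (-1:ℝ) ≤ 1),
    integral_Ioc_eq_integral_Ioo] at key
  have hi1 : IntegrableOn (fun x => (-a) * ((1 - x) ^ (a-1) * (1 + x) ^ (b+1)))
      (Ioo (-1:ℝ) 1) := by
    have := hint1
    rwa [intervalIntegrable_iff_integrableOn_Ioo_of_le (by norm_num : (-1:ℝ) ≤ 1)] at this
  have hi2 : IntegrableOn (fun x => (b+1) * ((1 - x) ^ a * (1 + x) ^ b))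
      (Ioo (-1:ℝ) 1) := by
    have := hint2
    rwa [intervalIntegrable_iff_integrableOn_Ioo_of_le (by norm_num : (-1:ℝ) ≤ 1)] at this
  rw [hF'] at key
  rw [integral_add hi1 hi2, MeasureTheory.integral_const_mul, MeasureTheory.integral_const_mul]
    at key
  have : (-a) * Ic (a-1) (b+1) + (b+1) * Ic a b = 0 := by
    rw [Ic, Ic]; simpa using key
  linarith




lemma II_smul_left (a b : ℝ) (c : ℝ) (p q : ℝ[X]) :
    II a b (c • p) q = c * II a b p q := by
  rw [II_symm, II_smul_right, II_symm]

noncomputable def Bpoly (a b : ℝ) (q : ℝ[X]) : ℝ[X] :=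
  derivative q * (1 - X ^ 2) + (C (b - a) * q - C (a + b + 2) * (q * X))

lemma Bpoly_natDegree_le (a b : ℝ) (q : ℝ[X]) : (Bpoly a b q).natDegree ≤ q.natDegree + 1 := by
  refine le_trans (natDegree_add_le _ _) (max_le ?_ ?_)
  · rcases Nat.eq_zero_or_pos q.natDegree with h0 | hpos
    · have : derivative q = 0 := by
        rw [Polynomial.eq_C_of_natDegree_eq_zero h0]; simp
      rw [this]; simp
    · refine le_trans (natDegree_mul_le) ?_
      have h1 : (derivative q).natDegree ≤ q.natDegree - 1 := natDegree_derivative_le q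
      have h2 : ((1:ℝ[X]) - X ^ 2).natDegree ≤ 2 := by
        refine le_trans (natDegree_sub_le _ _) ?_
        simp [natDegree_X_pow]
      omega
  · refine le_trans (natDegree_sub_le _ _) (max_le ?_ ?_)
    · refine le_trans (natDegree_mul_le) ?_
      simp [natDegree_C]
    · refine le_trans (natDegree_mul_le) ?_
      have : ((q * X : ℝ[X])).natDegree ≤ q.natDegree + 1 := by
        refine le_trans (natDegree_mul_le) ?_
        simp [natDegree_X]
      simp [natDegree_C]
      omega

/-- integration by parts, split form -/
lemma IBP_split {a b : ℝ} (ha : -1 < a) (hb : -1 < b) (f q : ℝ[X]) :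
    II (a+1) (b+1) (derivative f) q = - II a b f (Bpoly a b q) := by
  have h0 := IBP_core ha hb (f * q)
  have e : ∀ x : ℝ, ((derivative (f*q)).eval x * ((1 - x) * (1 + x))
        + (f*q).eval x * ((b+1)*(1-x) - (a+1)*(1+x))) * ((1 - x) ^ a * (1 + x) ^ b)
      = ((derivative f).eval x * q.eval x * ((1-x)*(1+x))) * ((1 - x) ^ a * (1 + x) ^ b)
        + (f.eval x * (Bpoly a b q).eval x) * ((1 - x) ^ a * (1 + x) ^ b) := by
    intro x
    rw [derivative_mul]
    simp only [Bpoly, eval_add, eval_mul, eval_sub, eval_one, eval_pow, eval_X, eval_C]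
    ring
  rw [MeasureTheory.integral_congr_ae (Eventually.of_forall e)] at h0
  have hi1 : IntegrableOn (fun x =>
      ((derivative f).eval x * q.eval x * ((1-x)*(1+x))) * ((1 - x) ^ a * (1 + x) ^ b))
      (Ioo (-1:ℝ) 1) := wInt' ha hb (by fun_prop)
  have hi2 : IntegrableOn (fun x =>
      (f.eval x * (Bpoly a b q).eval x) * ((1 - x) ^ a * (1 + x) ^ b))
      (Ioo (-1:ℝ) 1) := wInt' ha hb (by fun_prop)
  rw [integral_add hi1 hi2] at h0
  have e1 : II (a+1) (b+1) (derivative f) q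
      = ∫ x in Ioo (-1:ℝ) 1,
          ((derivative f).eval x * q.eval x * ((1-x)*(1+x))) * ((1 - x) ^ a * (1 + x) ^ b) := by
    rw [II]
    refine setIntegral_congr_fun measurableSet_Ioo (fun x hx => ?_)
    have h1 : (1:ℝ) - x ≠ 0 := ne_of_gt (by linarith [hx.2])
    have h2 : (1:ℝ) + x ≠ 0 := ne_of_gt (by linarith [hx.1])
    rw [Real.rpow_add_one h1 a, Real.rpow_add_one h2 b]
    ring
  have e2 : II a b f (Bpoly a b q)
      = ∫ x in Ioo (-1:ℝ) 1,
          (f.eval x * (Bpoly a b q).eval x) * ((1 - x) ^ a * (1 + x) ^ b) := by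
    rw [II]
    refine setIntegral_congr_fun measurableSet_Ioo (fun x hx => ?_)
    ring
  rw [e1, e2]
  linarith

lemma II_gs_low {a b : ℝ} (ha : -1 < a) (hb : -1 < b) {n : ℕ} (hn : 1 ≤ n) {R : ℝ[X]}
    (hR : R.natDegree ≤ n) (hc : R.coeff n = 0) : II a b (gs a b n) R = 0 := by
  rcases eq_or_ne R 0 with h | h
  · rw [h, II_zero_right]
  · exact gs_orth a b ha hb n R (natDegree_lt_of_coeff_eq_zero h hR hc)

lemma gs_coeff_self (a b : ℝ) (ha : -1 < a) (hb : -1 < b) (n : ℕ) :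
    (gs a b n).coeff n = 1 := by
  have := gs_monic a b ha hb n
  rwa [Monic, leadingCoeff, gs_natDegree a b ha hb] at this

lemma II_gs_Xpow (a b : ℝ) (ha : -1 < a) (hb : -1 < b) (n : ℕ) :
    II a b (gs a b n) (X ^ n) = hh a b n := by
  have hXg : (X:ℝ[X]) ^ n = gs a b n + (X ^ n - gs a b n) := by ring
  rw [hXg, II_add_right ha hb]
  rcases eq_or_ne ((X:ℝ[X]) ^ n - gs a b n) 0 with h | h
  · rw [h, II_zero_right, hh]; ring
  · have : II a b (gs a b n) (X ^ n - gs a b n) = 0 := by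
      refine gs_orth a b ha hb n _ (natDegree_lt_of_coeff_eq_zero h ?_ ?_)
      · refine le_trans (natDegree_sub_le _ _) ?_
        simp [natDegree_X_pow, gs_natDegree a b ha hb]
      · rw [coeff_sub, coeff_X_pow, if_pos rfl, gs_coeff_self a b ha hb]; ring
    rw [this, hh]; ring

/-- derivative relation -/
lemma deriv_gs {a b : ℝ} (ha : -1 < a) (hb : -1 < b) (m : ℕ) :
    derivative (gs a b (m+1)) = ((m:ℝ)+1) • gs (a+1) (b+1) m := by
  have ha1 : (-1:ℝ) < a + 1 := by linarith
  have hb1 : (-1:ℝ) < b + 1 := by linarith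
  set d := derivative (gs a b (m+1)) with hd
  have hdm : d.coeff m = (m:ℝ)+1 := by
    rw [hd, coeff_derivative, gs_coeff_self a b ha hb]
    push_cast; ring
  have hdle : d.natDegree ≤ m := by
    rw [hd]
    refine le_trans (natDegree_derivative_le _) ?_
    rw [gs_natDegree a b ha hb]
    omega
  have hdnz : d ≠ 0 := fun h => by
    rw [h] at hdm; simp at hdm; nlinarith [hdm]
  have hdnd : d.natDegree = m :=
    le_antisymm hdle (le_natDegree_of_ne_zero (by rw [hdm]; positivity))
  have hm1 : ((m:ℝ)+1) ≠ 0 := by positivity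
  set p := ((m:ℝ)+1)⁻¹ • d with hp
  have hpnd : p.natDegree = m := by
    refine le_antisymm (le_trans (natDegree_smul_le _ _) hdle) (le_natDegree_of_ne_zero ?_)
    rw [hp, coeff_smul, hdm, smul_eq_mul]
    rw [inv_mul_cancel₀ hm1]; norm_num
  have hpm : Monic p := by
    rw [Monic, leadingCoeff, hpnd, hp, coeff_smul, hdm, smul_eq_mul, inv_mul_cancel₀ hm1]
  have hporth : ∀ q : ℝ[X], q.natDegree < m → II (a+1) (b+1) p q = 0 := by
    intro q hq
    rw [hp, II_smul_left, IBP_split ha hb]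
    have : II a b (gs a b (m+1)) (Bpoly a b q) = 0 := by
      refine gs_orth a b ha hb (m+1) _ ?_
      have := Bpoly_natDegree_le a b q
      omega
    rw [this]; ring
  have := gs_unique (a+1) (b+1) ha1 hb1 m p hpm hpnd hporth
  rw [hp] at this
  rw [← this, smul_smul, mul_inv_cancel₀ hm1, one_smul]

/-- norm relation (A) -/
lemma relA {a b : ℝ} (ha : -1 < a) (hb : -1 < b) (m : ℕ) :
    ((m:ℝ)+1) * hh (a+1) (b+1) m = ((m:ℝ) + a + b + 2) * hh a b (m+1) := by
  have ha1 : (-1:ℝ) < a + 1 := by linarith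
  have hb1 : (-1:ℝ) < b + 1 := by linarith
  set d := derivative (gs a b (m+1)) with hd
  have hdg := deriv_gs ha hb m
  rw [← hd] at hdg
  -- LHS computation
  have hL : II (a+1) (b+1) d d = ((m:ℝ)+1) * (((m:ℝ)+1) * hh (a+1) (b+1) m) := by
    rw [hdg, II_smul_left, II_smul_right, hh]
  -- coefficients of d
  have hdm : d.coeff m = (m:ℝ)+1 := by
    rw [hd, coeff_derivative, gs_coeff_self a b ha hb]; push_cast; ring
  have hdle : d.natDegree ≤ m := by
    rw [hd]; exact le_trans (natDegree_derivative_le _) (by rw [gs_natDegree a b ha hb]; omega)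
  have hdm1 : d.coeff (m+1) = 0 := coeff_eq_zero_of_natDegree_lt (by omega)
  have hdm2 : d.coeff (m+2) = 0 := coeff_eq_zero_of_natDegree_lt (by omega)
  have hsplit := IBP_split ha hb (gs a b (m+1)) d
  rw [← hd] at hsplit
  clear hd
  clear_value d
  -- coefficient of Bpoly a b d at m+1
  set Bd := Bpoly a b d with hBd
  have hBdeg : Bd.natDegree ≤ m + 1 := le_trans (Bpoly_natDegree_le a b d) (by omega)
  have hBco : Bd.coeff (m+1) = -(((m:ℝ)+1) * ((m:ℝ) + a + b + 2)) := by
    rw [hBd, Bpoly]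
    rw [coeff_add, coeff_sub]
    have c1 : (derivative d * (1 - X ^ 2)).coeff (m+1)
        = - (((m:ℝ)+1) * m) := by
      rw [mul_sub, mul_one, coeff_sub, coeff_mul_X_pow']
      rcases Nat.eq_zero_or_pos m with h0 | hpos
      · subst h0
        simp only [show ¬ (2 ≤ 0 + 1) by omega, if_false]
        rw [coeff_derivative, hdm2]
        push_cast; ring
      · rw [if_pos (by omega : 2 ≤ m + 1)]
        have : m + 1 - 2 = m - 1 := by omega
        rw [this, coeff_derivative, coeff_derivative, hdm2]
        have hmm : m - 1 + 1 = m := by omega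
        rw [hmm, hdm]
        have : ((m - 1 : ℕ) : ℝ) + 1 = (m:ℝ) := by
          have : ((m - 1 : ℕ) : ℝ) = (m:ℝ) - 1 := by
            push_cast [Nat.cast_sub hpos]; ring
          rw [this]; ring
        rw [this]
        push_cast; ring
    have c2 : (C (b - a) * d).coeff (m+1) = 0 := by
      rw [coeff_C_mul, hdm1]; ring
    have c3 : (C (a + b + 2) * (d * X)).coeff (m+1) = (a+b+2) * ((m:ℝ)+1) := by
      rw [coeff_C_mul, coeff_mul_X, hdm]
    rw [c1, c2, c3]
    ring
  -- the key identity
  have hIBd : II a b (gs a b (m+1)) Bd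
      = -(((m:ℝ)+1) * ((m:ℝ) + a + b + 2)) * hh a b (m+1) := by
    have hdecomp : Bd = (Bd - (Bd.coeff (m+1)) • X ^ (m+1)) + (Bd.coeff (m+1)) • X ^ (m+1) := by
      ring
    rw [hdecomp, II_add_right ha hb, II_smul_right, II_gs_Xpow a b ha hb]
    have hlow : II a b (gs a b (m+1)) (Bd - (Bd.coeff (m+1)) • X ^ (m+1)) = 0 := by
      refine II_gs_low ha hb (by omega) ?_ ?_
      · refine le_trans (natDegree_sub_le _ _) (max_le hBdeg ?_)
        exact le_trans (natDegree_smul_le _ _) (by rw [natDegree_X_pow])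
      · rw [coeff_sub, coeff_smul, coeff_X_pow, if_pos rfl, smul_eq_mul, mul_one, sub_self]
    rw [hlow, hBco]
    ring
  have hm1 : ((m:ℝ)+1) ≠ 0 := by positivity
  have h2 : ((m:ℝ)+1) * (((m:ℝ)+1) * hh (a+1) (b+1) m)
      = ((m:ℝ)+1) * (((m:ℝ) + a + b + 2) * hh a b (m+1)) := by
    rw [← hL, hsplit, hIBd]; ring
  exact mul_left_cancel₀ hm1 h2




lemma gs_zero (a b : ℝ) (ha : -1 < a) (hb : -1 < b) : gs a b 0 = 1 :=
  (gs_unique a b ha hb 0 1 monic_one natDegree_one (fun q hq => absurd hq (Nat.not_lt_zero _))).symm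

lemma hh_zero (a b : ℝ) (ha : -1 < a) (hb : -1 < b) : hh a b 0 = Ic a b := by
  rw [hh, gs_zero a b ha hb, II, Ic]
  refine MeasureTheory.integral_congr_ae (Eventually.of_forall fun x => ?_)
  simp

lemma Ic_pos (a b : ℝ) (ha : -1 < a) (hb : -1 < b) : 0 < Ic a b := by
  have := IIpos ha hb (p := 1) one_ne_zero
  rw [II] at this
  rw [Ic]
  have he : ∀ x : ℝ, eval x (1:ℝ[X]) * eval x (1:ℝ[X]) * (1 - x) ^ a * (1 + x) ^ b
      = (1 - x) ^ a * (1 + x) ^ b := by intro x; simp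
  rwa [MeasureTheory.integral_congr_ae (Eventually.of_forall he)] at this

noncomputable def FF (a b : ℝ) (n : ℕ) : ℝ :=
  (Nat.factorial n : ℝ) * Ic (a + n) (b + n)
    / ∏ j ∈ Finset.range n, ((n:ℝ) + (j:ℝ) + a + b + 1)

lemma prod_pos (a b : ℝ) (ha : -1 < a) (hb : -1 < b) (n : ℕ) :
    0 < ∏ j ∈ Finset.range n, ((n:ℝ) + (j:ℝ) + a + b + 1) := by
  refine Finset.prod_pos fun j hj => ?_
  rw [Finset.mem_range] at hj
  have h1 : (1:ℝ) ≤ (n:ℝ) := by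
    have : 1 ≤ n := by omega
    exact_mod_cast this
  have h2 : (0:ℝ) ≤ (j:ℝ) := Nat.cast_nonneg j
  linarith

lemma hh_eq_FF (n : ℕ) : ∀ a b : ℝ, -1 < a → -1 < b → hh a b n = FF a b n := by
  induction n with
  | zero =>
      intro a b ha hb
      rw [hh_zero a b ha hb, FF]
      simp
  | succ n ih =>
      intro a b ha hb
      have ha1 : (-1:ℝ) < a + 1 := by linarith
      have hb1 : (-1:ℝ) < b + 1 := by linarith
      have hrel := relA ha hb n
      have hpos : (0:ℝ) < (n:ℝ) + a + b + 2 := by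
        have : (0:ℝ) ≤ (n:ℝ) := Nat.cast_nonneg n
        linarith
      have hih := ih (a+1) (b+1) ha1 hb1
      -- hh a b (n+1) = ((n+1)/(n+a+b+2)) * FF (a+1) (b+1) n
      have h1 : hh a b (n+1) = (((n:ℝ)+1) / ((n:ℝ) + a + b + 2)) * FF (a+1) (b+1) n := by
        rw [← hih, div_mul_eq_mul_div, eq_div_iff (ne_of_gt hpos)]
        linear_combination -hrel
      rw [h1, FF, FF]
      have hIcargs : (a + 1 + (n:ℕ) : ℝ) = a + ((n+1:ℕ) : ℝ) := by push_cast; ring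
      have hIcargs' : (b + 1 + (n:ℕ) : ℝ) = b + ((n+1:ℕ) : ℝ) := by push_cast; ring
      rw [hIcargs, hIcargs']
      have hprod : (∏ j ∈ Finset.range (n+1), (((n+1:ℕ):ℝ) + (j:ℝ) + a + b + 1))
          = ((n:ℝ) + a + b + 2) * ∏ j ∈ Finset.range n, ((n:ℝ) + (j:ℝ) + (a+1) + (b+1) + 1) := by
        rw [Finset.prod_range_succ']
        rw [mul_comm]
        congr 1
        · push_cast; ring
        · refine Finset.prod_congr rfl fun j _ => ?_
          push_cast; ring
      rw [hprod]
      have hfac : ((Nat.factorial (n+1) : ℕ) : ℝ) = ((n:ℝ)+1) * (Nat.factorial n : ℝ) := by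
        rw [Nat.factorial_succ]; push_cast; ring
      rw [hfac]
      have hP := prod_pos (a+1) (b+1) ha1 hb1 n
      field_simp

lemma tendsto_ratio (c d : ℝ) :
    Tendsto (fun m : ℕ => ((m:ℝ) + c) / ((m:ℝ) + d)) atTop (𝓝 1) := by
  have hden : Tendsto (fun m : ℕ => ((m:ℝ) + d)) atTop atTop :=
    tendsto_atTop_add_const_right _ d tendsto_natCast_atTop_atTop
  have h0 : Tendsto (fun m : ℕ => (c - d) / ((m:ℝ) + d)) atTop (𝓝 0) :=
    Tendsto.div_atTop tendsto_const_nhds hden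
  have h1 : Tendsto (fun m : ℕ => 1 + (c - d) / ((m:ℝ) + d)) atTop (𝓝 1) := by
    have := tendsto_const_nhds (x := (1:ℝ)) (f := atTop (α := ℕ)) |>.add h0
    simpa using this
  refine h1.congr' ?_
  filter_upwards [hden.eventually_gt_atTop 0] with m hm
  have : ((m:ℝ) + d) ≠ 0 := ne_of_gt hm
  field_simp
  ring

/-- main ratio limit -/
lemma ratio_tendsto {α β : ℝ} (hα : -1 < α) (hβ : -1 < β) :
    Tendsto (fun m : ℕ => hh α (β+4) m / hh α β (m+2)) atTop (𝓝 1) := by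
  have hβ4 : (-1:ℝ) < β + 4 := by linarith
  have key2 : ∀ m : ℕ, hh α (β+4) m
        * ((((m:ℝ) + (α+1)) * ((m:ℝ) + (α+2))) * (((m:ℝ) + 1) * ((m:ℝ) + 2)))
      = hh α β (m+2)
        * ((((m:ℝ) + (β+4)) * ((m:ℝ) + (β+3))) * (((m:ℝ) + (α+β+4)) * ((m:ℝ) + (α+β+3)))) := by
    intro m
    have hm0 : (0:ℝ) ≤ (m:ℝ) := Nat.cast_nonneg m
    have h1 := hh_eq_FF m α (β+4) hα hβ4
    have h2 := hh_eq_FF (m+2) α β hα hβ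
    rw [h1, h2, FF, FF]
    rw [show m + 2 = (m + 1) + 1 from rfl]
    rw [Finset.prod_range_succ', Finset.prod_range_succ']
    rw [Nat.factorial_succ, Nat.factorial_succ]
    have hbody : (∏ j ∈ Finset.range m, ((((m+1)+1:ℕ):ℝ) + ((j+1+1:ℕ):ℝ) + α + β + 1))
        = ∏ j ∈ Finset.range m, ((m:ℝ) + (j:ℝ) + α + (β+4) + 1) :=
      Finset.prod_congr rfl fun j _ => by push_cast; ring
    rw [hbody]
    have hne1 : α+(m:ℝ)+1 ≠ 0 := by linarith
    have hne2 : α+(m:ℝ)+2 ≠ 0 := by linarith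
    have hIc1 := Ic_rec (a := α+(m:ℝ)+2) (b := β+(m:ℝ)+2) (by linarith) (by linarith)
    rw [show α+(m:ℝ)+2-1 = α+(m:ℝ)+1 by ring, show β+(m:ℝ)+2+1 = β+(m:ℝ)+3 by ring] at hIc1
    have hIc2 := Ic_rec (a := α+(m:ℝ)+1) (b := β+(m:ℝ)+3) (by linarith) (by linarith)
    rw [show α+(m:ℝ)+1-1 = α+(m:ℝ) by ring, show β+(m:ℝ)+3+1 = β+(m:ℝ)+4 by ring] at hIc2
    have e12 : Ic (α+(m:ℝ)) (β+(m:ℝ)+4) * ((α+(m:ℝ)+1) * (α+(m:ℝ)+2))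
        = ((β+(m:ℝ)+4) * (β+(m:ℝ)+3)) * Ic (α+(m:ℝ)+2) (β+(m:ℝ)+2) := by
      linear_combination (-(α+(m:ℝ)+2)) * hIc2 + (-(β+(m:ℝ)+4)) * hIc1
    rw [show β + 4 + (m:ℝ) = β+(m:ℝ)+4 by ring]
    rw [show α + (((m+1)+1:ℕ):ℝ) = α+(m:ℝ)+2 by push_cast; ring,
      show β + (((m+1)+1:ℕ):ℝ) = β+(m:ℝ)+2 by push_cast; ring]
    have hPpos := prod_pos α (β+4) hα hβ4 m
    have hPne : (∏ j ∈ Finset.range m, ((m:ℝ) + (j:ℝ) + α + (β+4) + 1)) ≠ 0 := ne_of_gt hPpos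
    have hf0 : ((((m+1)+1:ℕ)):ℝ) + ((0+1:ℕ):ℝ) + α + β + 1 ≠ 0 := by push_cast; linarith
    have hf1 : ((((m+1)+1:ℕ)):ℝ) + ((0:ℕ):ℝ) + α + β + 1 ≠ 0 := by push_cast; linarith
    rw [div_mul_eq_mul_div, div_mul_eq_mul_div, div_eq_div_iff hPne (by
      push_cast
      refine mul_ne_zero (mul_ne_zero hPne ?_) ?_
      · intro h; apply hf0; push_cast; linarith [h]
      · intro h; apply hf1; push_cast; linarith [h])]
    push_cast
    linear_combination ((Nat.factorial m : ℝ)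
      * (∏ j ∈ Finset.range m, ((m:ℝ) + (j:ℝ) + α + (β+4) + 1))
      * (((m:ℝ)+α+β+4) * ((m:ℝ)+α+β+3)) * (((m:ℝ)+1) * ((m:ℝ)+2))) * e12
  have key : ∀ m : ℕ, hh α (β+4) m / hh α β (m+2)
      = (((m:ℝ) + (β+4)) / ((m:ℝ) + (α+1)))
        * (((m:ℝ) + (β+3)) / ((m:ℝ) + (α+2)))
        * (((m:ℝ) + (α+β+4)) / ((m:ℝ) + 1))
        * (((m:ℝ) + (α+β+3)) / ((m:ℝ) + 2)) := by
    intro m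
    have hm0 : (0:ℝ) ≤ (m:ℝ) := Nat.cast_nonneg m
    have hhB := hh_pos α β hα hβ (m+2)
    have hd1 : ((m:ℝ) + (α+1)) ≠ 0 := by linarith
    have hd2 : ((m:ℝ) + (α+2)) ≠ 0 := by linarith
    have hd3 : ((m:ℝ) + 1) ≠ 0 := by linarith
    have hd4 : ((m:ℝ) + 2) ≠ 0 := by linarith
    rw [div_mul_div_comm, div_mul_div_comm, div_mul_div_comm]
    rw [div_eq_div_iff (ne_of_gt hhB) (by
      exact mul_ne_zero (mul_ne_zero (mul_ne_zero hd1 hd2) hd3) hd4)]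
    linear_combination key2 m
  have t := (((tendsto_ratio (β+4) (α+1)).mul (tendsto_ratio (β+3) (α+2))).mul
    (tendsto_ratio (α+β+4) 1)).mul (tendsto_ratio (α+β+3) 2)
  norm_num at t
  exact Tendsto.congr (fun m => (key m).symm) t



/-- weight-shift congruence for the factor (1+x)^4 -/
lemma II_shift4 {a b : ℝ} (hb : -1 < b) (p q : ℝ[X]) :
    II a b ((X+1)^2 * p) ((X+1)^2 * q) = II a (b+4) p q := by
  rw [II, II]
  refine setIntegral_congr_fun measurableSet_Ioo (fun x hx => ?_)
  have h2 : (0:ℝ) < 1 + x := by linarith [hx.1]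
  have e4 : (1 + x) ^ (b + 4) = (1 + x) ^ b * (1 + x) ^ (4:ℕ) := by
    rw [show (b + 4 : ℝ) = b + ((4:ℕ):ℝ) by norm_num, Real.rpow_add h2,
      Real.rpow_natCast]
  rw [e4]
  simp only [eval_mul, eval_pow, eval_add, eval_X, eval_one]
  ring


end SJ

open SJ

theorem sobolev_jacobi_norm_ratio_asymptotics
    (α β : ℝ) (hα : -1 < α) (hβ : -1 < β)
    (Pt : ℕ → ℝ[X])
    (hdeg : ∀ n, (Pt n).natDegree = n)
    (hone : ∀ n, (Pt n).eval 1 = 1)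
    (horth : ∀ n k, k < n →
      ∫ x in Set.Ioo (-1 : ℝ) 1, (Pt n).eval x * x ^ k * (1 - x) ^ α * (1 + x) ^ β = 0)
    (M N : ℝ) (hM : 0 < M) (hN : 0 < N)
    (innS : ℝ[X] → ℝ[X] → ℝ)
    (hinnS : ∀ p q : ℝ[X], innS p q
      = (∫ x in Set.Ioo (-1 : ℝ) 1, p.eval x * q.eval x * (1 - x) ^ α * (1 + x) ^ β)
        + M * p.eval (-1) * q.eval (-1)
        + N * (derivative p).eval (-1) * (derivative q).eval (-1))
    (Q : ℕ → ℝ[X])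
    (hQdeg : ∀ n, (Q n).natDegree = n)
    (hQlead : ∀ n, (Q n).leadingCoeff = (Pt n).leadingCoeff)
    (hQorth : ∀ n, ∀ p : ℝ[X], p.natDegree < n → innS (Q n) p = 0)
    : Tendsto (fun n : ℕ =>
        Real.sqrt (innS (Q n) (Q n))
          / Real.sqrt (∫ x in Set.Ioo (-1 : ℝ) 1,
              ((Pt n).eval x) ^ 2 * (1 - x) ^ α * (1 + x) ^ β))
      atTop (nhds 1) := by
  have hβ4 : (-1:ℝ) < β + 4 := by linarith
  -- innS in terms of II
  have hS : ∀ p q : ℝ[X], innS p q = II α β p q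
      + M * p.eval (-1) * q.eval (-1)
      + N * (derivative p).eval (-1) * (derivative q).eval (-1) := by
    intro p q; rw [hinnS]; rfl
  -- innS bilinearity bits
  have hSadd : ∀ p q r : ℝ[X], innS p (q + r) = innS p q + innS p r := by
    intro p q r
    rw [hS, hS, hS, II_add_right hα hβ]
    simp only [eval_add, derivative_add]
    ring
  have hSsymm : ∀ p q : ℝ[X], innS p q = innS q p := by
    intro p q; rw [hS, hS, II_symm]; ring
  have hSnonneg : ∀ p : ℝ[X], 0 ≤ innS p p := by
    intro p
    rw [hS]
    have h1 := IInonneg hα hβ p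
    nlinarith [mul_self_nonneg (p.eval (-1)), mul_self_nonneg ((derivative p).eval (-1))]
  -- Pt orthogonality
  have hPtorth : ∀ n (q : ℝ[X]), q.natDegree < n → II α β (Pt n) q = 0 := by
    intro n q hq
    rw [II_eq_sum_monomials hα hβ]
    refine Finset.sum_eq_zero fun k hk => ?_
    rw [Finset.mem_range] at hk
    have hkn : k < n := by omega
    have hX : II α β (Pt n) (X ^ k) = 0 := by
      rw [← horth n k hkn, II]
      refine MeasureTheory.integral_congr_ae (Eventually.of_forall fun x => ?_)
      simp
    rw [hX]; ring
  -- nonvanishing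
  have hPtnz : ∀ n, 1 ≤ n → Pt n ≠ 0 := by
    intro n hn h0
    have := hdeg n
    rw [h0] at this
    simp at this
    omega
  have hlnz : ∀ n, 1 ≤ n → (Pt n).leadingCoeff ≠ 0 := fun n hn =>
    leadingCoeff_ne_zero.mpr (hPtnz n hn)
  -- Pt n = ℓ • gs n
  have hPtgs : ∀ n, 1 ≤ n → Pt n = (Pt n).leadingCoeff • gs α β n := by
    intro n hn
    set l := (Pt n).leadingCoeff with hl
    have hlz : l ≠ 0 := hlnz n hn
    set p := l⁻¹ • Pt n with hp
    have hpc : p.coeff n = 1 := by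
      rw [hp, coeff_smul, smul_eq_mul]
      have : (Pt n).coeff n = l := by rw [hl, leadingCoeff, hdeg]
      rw [this, inv_mul_cancel₀ hlz]
    have hpnd : p.natDegree = n := by
      refine le_antisymm (le_trans (natDegree_smul_le _ _) (le_of_eq (hdeg n)))
        (le_natDegree_of_ne_zero (by rw [hpc]; norm_num))
    have hpm : Monic p := by rw [Monic, leadingCoeff, hpnd, hpc]
    have hporth : ∀ q : ℝ[X], q.natDegree < n → II α β p q = 0 := by
      intro q hq
      rw [hp, II_smul_left, hPtorth n q hq]; ring
    have := gs_unique α β hα hβ n p hpm hpnd hporth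
    rw [hp] at this
    rw [← this, smul_smul, mul_inv_cancel₀ hlz, one_smul]
  -- denominator value
  have hDen : ∀ n, (∫ x in Set.Ioo (-1 : ℝ) 1,
      ((Pt n).eval x) ^ 2 * (1 - x) ^ α * (1 + x) ^ β) = II α β (Pt n) (Pt n) := by
    intro n
    rw [II]
    refine MeasureTheory.integral_congr_ae (Eventually.of_forall fun x => ?_)
    ring
  have hDval : ∀ n, 1 ≤ n → II α β (Pt n) (Pt n) = (Pt n).leadingCoeff^2 * hh α β n := by
    intro n hn
    conv_lhs => rw [hPtgs n hn]
    rw [II_smul_left, II_smul_right, hh]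
    ring
  -- lower bound
  have hLow : ∀ n, 1 ≤ n → II α β (Pt n) (Pt n) ≤ innS (Q n) (Q n) := by
    intro n hn
    set s := Q n - Pt n with hs
    have hslt : s.natDegree < n := by
      rcases eq_or_ne s 0 with h0 | h0
      · rw [h0]; simp; omega
      · refine natDegree_lt_of_coeff_eq_zero h0 ?_ ?_
        · rw [hs]
          refine le_trans (natDegree_sub_le _ _) ?_
          rw [hQdeg, hdeg]; omega
        · rw [hs, coeff_sub]
          have h1 : (Q n).coeff n = (Q n).leadingCoeff := by rw [leadingCoeff, hQdeg]
          have h2 : (Pt n).coeff n = (Pt n).leadingCoeff := by rw [leadingCoeff, hdeg]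
          rw [h1, h2, hQlead]; ring
    have hQn : Q n = Pt n + s := by rw [hs]; ring
    have hII : II α β (Q n) (Q n)
        = II α β (Pt n) (Pt n) + II α β s s := by
      conv_lhs => rw [hQn]
      rw [II_symm, II_add_right hα hβ, II_symm α β (Pt n + s) (Pt n),
        II_symm α β (Pt n + s) s, II_add_right hα hβ, II_add_right hα hβ]
      rw [II_symm α β s (Pt n), hPtorth n s hslt]
      ring
    have h1 : II α β (Pt n) (Pt n) ≤ II α β (Q n) (Q n) := by
      rw [hII]
      have := IInonneg hα hβ s
      linarith
    have h2 : II α β (Q n) (Q n) ≤ innS (Q n) (Q n) := by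
      rw [hS]
      nlinarith [mul_self_nonneg ((Q n).eval (-1)), mul_self_nonneg ((derivative (Q n)).eval (-1))]
    linarith
  -- upper bound
  have hUp : ∀ m : ℕ, innS (Q (m+2)) (Q (m+2))
      ≤ (Pt (m+2)).leadingCoeff^2 * hh α (β+4) m := by
    intro m
    set l := (Pt (m+2)).leadingCoeff with hl
    set g' := gs α (β+4) m with hg'
    set T : ℝ[X] := l • ((X+1)^2 * g') with hT
    have hg'monic : Monic g' := gs_monic α (β+4) hα hβ4 m
    have hXmonic : Monic (((X:ℝ[X])+1)^2) := by
      have : ((X:ℝ[X])+1) = X + C 1 := by rw [C_1]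
      rw [this]
      exact (monic_X_add_C (1:ℝ)).pow 2
    have hprodmonic : Monic (((X:ℝ[X])+1)^2 * g') := hXmonic.mul hg'monic
    have hprodnd : (((X:ℝ[X])+1)^2 * g').natDegree = m + 2 := by
      rw [hXmonic.natDegree_mul hg'monic, gs_natDegree α (β+4) hα hβ4]
      have : (((X:ℝ[X])+1)^2).natDegree = 2 := by
        have h1 : ((X:ℝ[X])+1) = X + C 1 := by rw [C_1]
        rw [natDegree_pow, h1, natDegree_X_add_C]
      rw [this]; omega
    have hTnd : T.natDegree ≤ m + 2 :=
      le_trans (natDegree_smul_le _ _) (le_of_eq hprodnd)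
    have hTco : T.coeff (m+2) = l := by
      rw [hT, coeff_smul, smul_eq_mul]
      have : (((X:ℝ[X])+1)^2 * g').coeff (m+2) = 1 := by
        have := hprodmonic
        rwa [Monic, leadingCoeff, hprodnd] at this
      rw [this, mul_one]
    -- D = T - Q has low degree
    set D : ℝ[X] := T - Q (m+2) with hD
    have hDlt : D.natDegree < m + 2 := by
      rcases eq_or_ne D 0 with h0 | h0
      · rw [h0]; simp
      · refine natDegree_lt_of_coeff_eq_zero h0 ?_ ?_
        · rw [hD]
          refine le_trans (natDegree_sub_le _ _) ?_
          rw [hQdeg]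
          exact max_le hTnd le_rfl
        · rw [hD, coeff_sub, hTco]
          have h1 : (Q (m+2)).coeff (m+2) = (Q (m+2)).leadingCoeff := by
            rw [leadingCoeff, hQdeg]
          rw [h1, hQlead, ← hl]; ring
    -- extremality
    have hTQ : T = Q (m+2) + D := by rw [hD]; ring
    have hQD : innS (Q (m+2)) D = 0 := hQorth (m+2) D hDlt
    have hDQ : innS D (Q (m+2)) = 0 := by rw [hSsymm]; exact hQD
    have hSadd_l : ∀ p q r : ℝ[X], innS (p + q) r = innS p r + innS q r := by
      intro p q r
      rw [hSsymm, hSadd, hSsymm r p, hSsymm r q]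
    have hexp : innS T T = innS (Q (m+2)) (Q (m+2)) + innS D D := by
      conv_lhs => rw [hTQ]
      rw [hSadd_l, hSadd, hSadd, hQD, hDQ]
      ring
    -- value of innS T T
    have hTev : T.eval (-1) = 0 := by
      rw [hT]
      simp
    have hT'ev : (derivative T).eval (-1) = 0 := by
      rw [hT, derivative_smul, derivative_mul, derivative_pow]
      simp
    have hTval : innS T T = l^2 * hh α (β+4) m := by
      rw [hS, hTev, hT'ev]
      have : II α β T T = l^2 * II α β ((X+1)^2 * g') ((X+1)^2 * g') := by
        rw [hT, II_smul_left, II_smul_right]; ring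
      rw [this, II_shift4 hβ, hg']
      rw [show II α (β+4) (gs α (β+4) m) (gs α (β+4) m) = hh α (β+4) m from rfl]
      ring
    have := hSnonneg D
    have hfin : innS (Q (m+2)) (Q (m+2)) ≤ innS T T := by
      rw [hexp]; linarith
    rw [hTval] at hfin
    exact hfin
  -- limit of the bound
  have hW : Tendsto (fun m : ℕ => Real.sqrt (hh α (β+4) m / hh α β (m+2))) atTop (𝓝 1) := by
    have := (ratio_tendsto hα hβ).sqrt
    rwa [Real.sqrt_one] at this
  set V : ℕ → ℝ := fun n => Real.sqrt (hh α (β+4) (n-2) / hh α β n) with hV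
  have hVt : Tendsto V atTop (𝓝 1) := by
    refine Tendsto.congr' ?_ (hW.comp (tendsto_sub_atTop_nat 2))
    filter_upwards [eventually_ge_atTop 2] with n hn
    have h2 : n - 2 + 2 = n := by omega
    simp only [Function.comp, hV]
    rw [h2]
  -- squeeze
  refine tendsto_of_tendsto_of_tendsto_of_le_of_le' tendsto_const_nhds hVt ?_ ?_
  · filter_upwards [eventually_ge_atTop 2] with n hn
    obtain ⟨m, rfl⟩ : ∃ m, n = m + 2 := ⟨n - 2, by omega⟩
    have h1 : (1:ℕ) ≤ m + 2 := by omega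
    have hD0 : 0 < II α β (Pt (m+2)) (Pt (m+2)) := IIpos hα hβ (hPtnz (m+2) h1)
    rw [hDen (m+2), one_le_div (Real.sqrt_pos.mpr hD0)]
    exact Real.sqrt_le_sqrt (hLow (m+2) h1)
  · filter_upwards [eventually_ge_atTop 2] with n hn
    obtain ⟨m, rfl⟩ : ∃ m, n = m + 2 := ⟨n - 2, by omega⟩
    have h1 : (1:ℕ) ≤ m + 2 := by omega
    set l := (Pt (m+2)).leadingCoeff with hl
    have hlz : l ≠ 0 := hlnz (m+2) h1
    have hl2 : l^2 ≠ 0 := pow_ne_zero 2 hlz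
    have hhB := hh_pos α β hα hβ (m+2)
    have hD0 : 0 < II α β (Pt (m+2)) (Pt (m+2)) := IIpos hα hβ (hPtnz (m+2) h1)
    rw [hDen (m+2)]
    have hsqD : (0:ℝ) < Real.sqrt (II α β (Pt (m+2)) (Pt (m+2))) := Real.sqrt_pos.mpr hD0
    have step1 : Real.sqrt (innS (Q (m+2)) (Q (m+2))) / Real.sqrt (II α β (Pt (m+2)) (Pt (m+2)))
        ≤ Real.sqrt (l^2 * hh α (β+4) m) / Real.sqrt (II α β (Pt (m+2)) (Pt (m+2))) := by
      rw [div_le_div_iff_of_pos_right hsqD]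
      exact Real.sqrt_le_sqrt (hUp m)
    refine le_trans step1 (le_of_eq ?_)
    rw [hDval (m+2) h1, ← hl]
    rw [← Real.sqrt_div (by
      have := hh_pos α (β+4) hα hβ4 m
      have h2 := sq_nonneg l
      nlinarith : (0:ℝ) ≤ l^2 * hh α (β+4) m)]
    rw [mul_div_mul_left _ _ hl2]
    have h2 : m + 2 - 2 = m := by omega
    simp only [hV, h2]
end
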